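/- arXiv:1908.09473 — 8 statements merged into one kernel-verified Lean document; each statement's English description precedes it below -/
import Mathlib

section
/- Let k ≥ 3 and let G be a connected k-chordal finite simple graph of diameter at most D. Let P ⊆ V(G) be a set of vertices such that the subgraph of G induced by P is connected, and let G_P be the 1-hop extension of P in G. Then for all vertices u, v ∈ P, the distance between u and v in G_P is at most k · dist_G(u,v); in particular it is at most kD. -/
/-- The 1-hop extension of a vertex set `P` in `G`: the subgraph of `G` consisting of
all edges of `G` with at least one endpoint in `P` (modeled as a graph on the same
vertex type; vertices outside the closed neighborhood of `P` are isolated). -/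
def oneHopExt {V : Type*} (G : SimpleGraph V) (P : Set V) : SimpleGraph V where
  Adj u v := G.Adj u v ∧ (u ∈ P ∨ v ∈ P)
  symm := ⟨fun u v h => ⟨h.1.symm, h.2.symm⟩⟩
  loopless := ⟨fun v h => G.loopless.irrefl v h.1⟩

/-- A cycle `w` has a chord: an edge of `G` joining two vertices of the cycle which is
not an edge of the cycle (for cycles of length at least 4 this is exactly an edge joining
two non-consecutive vertices of the cycle). -/
def HasChord {V : Type*} {G : SimpleGraph V} {v : V} (w : G.Walk v v) : Prop :=
  ∃ a b, a ∈ w.support ∧ b ∈ w.support ∧ G.Adj a b ∧ s(a, b) ∉ w.edges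

/-- `G` is `k`-chordal: every cycle of length greater than `k` has a chord
(equivalently, `G` has no induced cycle of length greater than `k`). -/
def KChordal {V : Type*} (G : SimpleGraph V) (k : ℕ) : Prop :=
  ∀ (v : V) (w : G.Walk v v), w.IsCycle → k < w.length → HasChord w


/-!
For `x, y` joined by a path of `G_P` with inner vertices in `P` (for `x, y ∈ P` such a path comes
from the connectivity of `G[P]`), we show `dist_{G_P}(x, y) ≤ k · dist_G(x, y)` by induction on
`dist_G(x, y)`. Let `Q` be a shortest path of `G` and `W` a shortest path of the kind above, both
from `x` to `y`; each is chordless in its graph. If `|Q| + |W| ≤ k`, then `W` is short enough.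
Otherwise either `Q` and `W` share an inner vertex `z`, or together they form a cycle of length
`> k`, whose chord must join an inner vertex `z` of `Q` to a vertex of `W` in `P`. In both cases
`x, z` and `z, y` are again joined by paths of the kind above, and induction applies to the two
halves of `Q`.
-/

namespace SimpleGraph

variable {V : Type*} {G H : SimpleGraph V} {S T : Set V} {u v w : V}

def restrictTo (H : SimpleGraph V) (S : Set V) : SimpleGraph V where
  Adj a b := H.Adj a b ∧ a ∈ S ∧ b ∈ S
  symm := ⟨fun _ _ h => ⟨h.1.symm, h.2.2, h.2.1⟩⟩
  loopless := ⟨fun _ h => H.loopless.irrefl _ h.1⟩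

lemma restrictTo_le : H.restrictTo S ≤ H := fun _ _ h => h.1

lemma restrictTo_mono (h : S ⊆ T) : H.restrictTo S ≤ H.restrictTo T :=
  fun _ _ hab => ⟨hab.1, h hab.2.1, h hab.2.2⟩

namespace Walk

lemma mem_of_mem_support_restrictTo (W : (H.restrictTo S).Walk u v) (hu : u ∈ S)
    (hw : w ∈ W.support) : w ∈ S := by
  induction W with
  | nil => simp_all
  | cons h p ih =>
    rw [support_cons, List.mem_cons] at hw
    exact hw.elim (· ▸ hu) (ih h.2.2)

lemma reachable_restrictTo (W : H.Walk u v) (hW : ∀ w ∈ W.support, w ∈ S) :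
    (H.restrictTo S).Reachable u v := by
  induction W with
  | nil => rfl
  | cons h p ih =>
    have hadj : (H.restrictTo S).Adj _ _ := ⟨h, hW _ (by simp), hW _ (by simp)⟩
    exact hadj.reachable.trans (ih fun w hw => hW w (by simp [hw]))

lemma mem_edges_of_length_eq_one {p : G.Walk u v} (h : p.length = 1) : s(u, v) ∈ p.edges := by
  cases p with
  | nil => simp at h
  | cons _ p => cases p with
    | nil => simp
    | cons _ _ => simp at h

lemma isChordless_of_length_eq_dist {p : G.Walk u v} (hp : p.length = G.dist u v) :
    p.IsChordless := by
  classical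
  rw [isChordless_iff_forall_mem_edges]
  intro a b ha hb hab
  have hab1 : G.dist a b = 1 := dist_eq_one_iff_adj.mpr hab
  rw [← p.take_spec ha, mem_support_append_iff] at hb
  rcases hb with hb | hb
  · have hsub := (isSubwalk_dropUntil _ hb).trans (isSubwalk_takeUntil p ha)
    have hlen := length_eq_dist_of_subwalk hp hsub
    rw [dist_comm, hab1] at hlen
    exact Sym2.eq_swap ▸ hsub.edges_subset (mem_edges_of_length_eq_one hlen)
  · have hsub := (isSubwalk_takeUntil _ hb).trans (isSubwalk_dropUntil p ha)
    have hlen := length_eq_dist_of_subwalk hp hsub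
    rw [hab1] at hlen
    exact hsub.edges_subset (mem_edges_of_length_eq_one hlen)

lemma dist_add_dist_le_of_mem_support [DecidableEq V] (p : G.Walk u v)
    (hp : p.length = G.dist u v) (hw : w ∈ p.support) :
    G.dist u w + G.dist w v ≤ G.dist u v := by
  have hsplit := congrArg length (p.take_spec hw)
  rw [length_append] at hsplit
  have := dist_le (p.takeUntil w hw)
  have := dist_le (p.dropUntil w hw)
  omega

lemma IsPath.isCycle_append_of_internally_disjoint {p : G.Walk u v} {q : G.Walk v u}
    (hp : p.IsPath) (hq : q.IsPath) (h : ∀ w ∈ p.support, w ∈ q.support → w = u ∨ w = v)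
    (hlen : 2 < p.length + q.length) : (p.append q).IsCycle := by
  refine hp.isCycle_append hq (List.disjoint_left.mpr fun w hwp hwq => ?_) (by omega)
  have hwu : w ≠ u := by
    rintro rfl
    exact (List.nodup_cons.mp (p.cons_tail_support.symm ▸ hp.support_nodup)).1 hwp
  have hwv : w ≠ v := by
    rintro rfl
    exact (List.nodup_cons.mp (q.cons_tail_support.symm ▸ hq.support_nodup)).1 hwq
  exact (h w (List.mem_of_mem_tail hwp) (List.mem_of_mem_tail hwq)).elim hwu hwv

end Walk

variable {P : Set V} {k : ℕ} {x y a b : V}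

lemma oneHopExt_le : oneHopExt G P ≤ G := fun _ _ h => h.1

/-- Paths from `x` to `y` in this graph are the paths of `G_P` from `x` to `y` whose inner
vertices lie in `P`. -/
abbrev oneHopExtBetween (G : SimpleGraph V) (P : Set V) (x y : V) : SimpleGraph V :=
  (oneHopExt G P).restrictTo (insert x (insert y P))

lemma oneHopExtBetween_le : oneHopExtBetween G P x y ≤ oneHopExt G P := restrictTo_le

lemma Reachable.oneHopExtBetween_symm (h : (oneHopExtBetween G P x y).Reachable x y) :
    (oneHopExtBetween G P y x).Reachable y x := by
  rw [oneHopExtBetween, Set.insert_comm]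
  exact h.symm

lemma Reachable.oneHopExtBetween_of_induce {hx : x ∈ P} {hy : y ∈ P}
    (h : (G.induce P).Reachable ⟨x, hx⟩ ⟨y, hy⟩) : (oneHopExtBetween G P x y).Reachable x y := by
  obtain ⟨W⟩ := h
  let f : G.induce P →g oneHopExt G P := ⟨Subtype.val, fun {a _} hab => ⟨hab, Or.inl a.2⟩⟩
  refine (W.map f).reachable_restrictTo fun z hz => ?_
  obtain ⟨z, -, rfl⟩ := List.mem_map.mp (Walk.support_map f W ▸ hz)
  exact Set.mem_insert_of_mem _ (Set.mem_insert_of_mem _ z.2)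

lemma Adj.reachable_oneHopExtBetween (hab : G.Adj a b) (hb : b ∈ P)
    (h : (oneHopExtBetween G P b x).Reachable b x) :
    (oneHopExtBetween G P a x).Reachable a x := by
  have hadj : (oneHopExtBetween G P a x).Adj a b := ⟨⟨hab, Or.inr hb⟩, by simp, by simp [hb]⟩
  refine hadj.reachable.trans (h.mono (restrictTo_mono fun z hz => ?_))
  simp only [Set.mem_insert_iff] at hz ⊢
  rcases hz with rfl | hz <;> tauto

lemma Walk.IsPath.reachable_oneHopExtBetween_start {W : (oneHopExt G P).Walk x y}
    (hW : W.IsPath) (hWS : ∀ z ∈ W.support, z ∈ insert x (insert y P)) (hb : b ∈ W.support)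
    (hby : b ≠ y) : (oneHopExtBetween G P x b).Reachable x b := by
  classical
  refine (W.takeUntil b hb).reachable_restrictTo fun z hz => ?_
  have hzy : z ≠ y := fun h => endpoint_notMem_support_takeUntil hW hb hby.symm (h ▸ hz)
  have := hWS z (W.support_takeUntil_subset_support hb hz)
  simp only [Set.mem_insert_iff] at this ⊢
  tauto

lemma Walk.IsPath.reachable_oneHopExtBetween_of_mem_support
    {W : (oneHopExtBetween G P x y).Walk x y} (hW : W.IsPath) (hw : w ∈ W.support)
    (hwx : w ≠ x) (hwy : w ≠ y) :
    (oneHopExtBetween G P x w).Reachable x w ∧ (oneHopExtBetween G P w y).Reachable w y := by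
  have hWS : ∀ z ∈ W.support, z ∈ insert x (insert y P) :=
    fun z hz => W.mem_of_mem_support_restrictTo (Set.mem_insert _ _) hz
  have hW' := hW.mapLe oneHopExtBetween_le
  refine ⟨hW'.reachable_oneHopExtBetween_start (by simpa using hWS) (by simpa using hw) hwy,
    (hW'.reverse.reachable_oneHopExtBetween_start ?_ (by simpa using hw) hwx).oneHopExtBetween_symm⟩
  simpa [Set.insert_comm] using hWS

lemma exists_inner_reachable_of_chord {Q : G.Walk x y} (hQ : Q.length = G.dist x y)
    {W : (oneHopExtBetween G P x y).Walk x y} (hW : W.length = (oneHopExtBetween G P x y).dist x y)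
    (hab : G.Adj a b) (ha : a ∈ Q.support ∨ a ∈ W.support) (hb : b ∈ Q.support ∨ b ∈ W.support)
    (habQ : s(a, b) ∉ Q.edges) (habW : s(a, b) ∉ W.edges) :
    ∃ z ∈ Q.support, z ≠ x ∧ z ≠ y ∧ (oneHopExtBetween G P x z).Reachable x z ∧
      (oneHopExtBetween G P z y).Reachable z y := by
  have hQc := Walk.isChordless_of_length_eq_dist hQ
  have hWc := Walk.isChordless_of_length_eq_dist hW
  have hWS : ∀ z ∈ W.support, z ∈ insert x (insert y P) :=
    fun z hz => W.mem_of_mem_support_restrictTo (Set.mem_insert _ _) hz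
  have hWadj : ∀ {a b}, a ∈ W.support → b ∈ W.support → G.Adj a b → a ∈ P ∨ b ∈ P →
      (oneHopExtBetween G P x y).Adj a b := fun ha hb hab h => ⟨⟨hab, h⟩, hWS _ ha, hWS _ hb⟩
  have hWP : ∀ z ∈ W.support, z ∉ Q.support → z ∈ P := by
    intro z hz hzQ
    have := hWS z hz
    simp only [Set.mem_insert_iff] at this
    rcases this with rfl | rfl | h
    exacts [absurd Q.start_mem_support hzQ, absurd Q.end_mem_support hzQ, h]
  wlog haQ : a ∈ Q.support generalizing a b
  · have haW := ha.resolve_left haQ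
    by_cases hbQ : b ∈ Q.support
    · exact this hab.symm hb ha (by rwa [Sym2.eq_swap]) (by rwa [Sym2.eq_swap]) hbQ
    · have hbW := hb.resolve_left hbQ
      exact absurd (hWc.mem_edges haW hbW (hWadj haW hbW hab (.inl (hWP a haW haQ)))) habW
  have hbQ : b ∉ Q.support := fun hbQ => habQ (hQc.mem_edges haQ hbQ hab)
  have hbW := hb.resolve_left hbQ
  have hbP := hWP b hbW hbQ
  have hax : a ≠ x := by
    rintro rfl
    exact habW (hWc.mem_edges W.start_mem_support hbW
      (hWadj W.start_mem_support hbW hab (.inr hbP)))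
  have hay : a ≠ y := by
    rintro rfl
    exact habW (hWc.mem_edges W.end_mem_support hbW (hWadj W.end_mem_support hbW hab (.inr hbP)))
  obtain ⟨hxb, hby⟩ := (W.isPath_of_length_eq_dist hW).reachable_oneHopExtBetween_of_mem_support
    hbW (fun h => hbQ (h ▸ Q.start_mem_support)) (fun h => hbQ (h ▸ Q.end_mem_support))
  exact ⟨a, haQ, hax, hay,
    (hab.reachable_oneHopExtBetween hbP hxb.oneHopExtBetween_symm).oneHopExtBetween_symm,
    hab.reachable_oneHopExtBetween hbP hby⟩

lemma exists_inner_reachable_of_kChordal (hk : 2 ≤ k) (hG : KChordal G k)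
    {Q : G.Walk x y} (hQ : Q.length = G.dist x y) {W : (oneHopExtBetween G P x y).Walk x y}
    (hW : W.length = (oneHopExtBetween G P x y).dist x y) (hlen : k < Q.length + W.length) :
    ∃ z ∈ Q.support, z ≠ x ∧ z ≠ y ∧ (oneHopExtBetween G P x z).Reachable x z ∧
      (oneHopExtBetween G P z y).Reachable z y := by
  have hWp : W.IsPath := W.isPath_of_length_eq_dist hW
  by_cases hshared : ∃ z ∈ Q.support, z ∈ W.support ∧ z ≠ x ∧ z ≠ y
  · obtain ⟨z, hzQ, hzW, hzx, hzy⟩ := hshared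
    exact ⟨z, hzQ, hzx, hzy, hWp.reachable_oneHopExtBetween_of_mem_support hzW hzx hzy⟩
  have hWG : oneHopExtBetween G P x y ≤ G := oneHopExtBetween_le.trans oneHopExt_le
  have hcycle : (Q.append (W.mapLe hWG).reverse).IsCycle := by
    refine (Q.isPath_of_length_eq_dist hQ).isCycle_append_of_internally_disjoint
      (hWp.mapLe hWG).reverse (fun z hzQ hzW => ?_) (by simp; omega)
    rw [Walk.support_reverse, List.mem_reverse, Walk.support_mapLe_eq_support] at hzW
    by_contra! h
    exact hshared ⟨z, hzQ, hzW, h⟩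
  obtain ⟨a, b, ha, hb, hab, habC⟩ := hG x _ hcycle (by simpa using hlen)
  simp only [Walk.mem_support_append_iff, Walk.support_reverse, List.mem_reverse,
    Walk.support_mapLe_eq_support] at ha hb
  simp only [Walk.edges_append, Walk.edges_reverse, Walk.edges_mapLe_eq_edges, List.mem_append,
    List.mem_reverse, not_or] at habC
  exact exists_inner_reachable_of_chord hQ hW hab ha hb habC.1 habC.2

theorem dist_oneHopExt_le_mul_dist (hk : 2 ≤ k) (hG : KChordal G k)
    (h : (oneHopExtBetween G P x y).Reachable x y) :
    (oneHopExt G P).dist x y ≤ k * G.dist x y := by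
  classical
  induction hs : G.dist x y using Nat.strong_induction_on generalizing x y with
  | _ s ih =>
  obtain rfl | hxy := eq_or_ne x y
  · simp
  have hGr : G.Reachable x y := h.mono (oneHopExtBetween_le.trans oneHopExt_le)
  have hs0 : 0 < s := hs ▸ Nat.pos_of_ne_zero (by simp [hxy, hGr])
  obtain ⟨Q, hQ⟩ := hGr.exists_walk_length_eq_dist
  obtain ⟨W, hW⟩ := h.exists_walk_length_eq_dist
  by_cases hshort : Q.length + W.length ≤ k
  · calc (oneHopExt G P).dist x y ≤ (W.mapLe oneHopExtBetween_le).length := dist_le _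
      _ ≤ k := by simp only [Walk.length_mapLe]; omega
      _ ≤ k * s := Nat.le_mul_of_pos_right k hs0
  obtain ⟨z, hzQ, hzx, hzy, hxz, hzy'⟩ :=
    exists_inner_reachable_of_kChordal hk hG hQ hW (by omega)
  have hsum := Q.dist_add_dist_le_of_mem_support hQ hzQ
  have hxz_lt : G.dist x z < s :=
    hs ▸ hQ ▸ (dist_le (Q.takeUntil z hzQ)).trans_lt (Q.length_takeUntil_lt_length hzQ hzy)
  have hzy_lt : G.dist z y < s :=
    hs ▸ hQ ▸ (dist_le (Q.dropUntil z hzQ)).trans_lt (Q.length_dropUntil_lt_length hzQ hzx)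
  calc (oneHopExt G P).dist x y
      ≤ (oneHopExt G P).dist x z + (oneHopExt G P).dist z y :=
        (hxz.mono oneHopExtBetween_le).dist_triangle_left y
    _ ≤ k * G.dist x z + k * G.dist z y :=
        add_le_add (ih _ hxz_lt hxz rfl) (ih _ hzy_lt hzy' rfl)
    _ ≤ k * s := by rw [← mul_add]; exact Nat.mul_le_mul_left k (hs ▸ hsum)

end SimpleGraph

theorem oneHopExt_dist_le_of_kChordal_general {V : Type*} (G : SimpleGraph V)
    (k D : ℕ) (hk : 3 ≤ k) (hchordal : KChordal G k)
    (hdiam : ∀ u v : V, G.dist u v ≤ D)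
    (P : Set V) (hP : (G.induce P).Connected)
    (u v : V) (hu : u ∈ P) (hv : v ∈ P) :
    (oneHopExt G P).dist u v ≤ k * G.dist u v ∧ (oneHopExt G P).dist u v ≤ k * D := by
  have h := SimpleGraph.dist_oneHopExt_le_mul_dist (by omega) hchordal
    (hP ⟨u, hu⟩ ⟨v, hv⟩).oneHopExtBetween_of_induce
  exact ⟨h, h.trans (Nat.mul_le_mul_left k (hdiam u v))⟩

/-- For a connected `k`-chordal graph `G` (`k ≥ 3`) of diameter at most `D` and a set `P`
inducing a connected subgraph, any two vertices `u, v ∈ P` are at distance at most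
`k · dist_G(u,v)`, in particular at most `k·D`, in the 1-hop extension of `P`. -/
theorem oneHopExt_dist_le_of_kChordal {V : Type*} [Fintype V] (G : SimpleGraph V)
    (k D : ℕ) (hk : 3 ≤ k) (hconn : G.Connected) (hchordal : KChordal G k)
    (hdiam : ∀ u v : V, G.dist u v ≤ D)
    (P : Set V) (hP : (G.induce P).Connected)
    (u v : V) (hu : u ∈ P) (hv : v ∈ P) :
    (oneHopExt G P).dist u v ≤ k * G.dist u v ∧ (oneHopExt G P).dist u v ≤ k * D :=
  oneHopExt_dist_le_of_kChordal_general G k D hk hchordal hdiam P hP u v hu hv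
end

section
/- Let k ≥ 3 and let G be a connected k-chordal finite simple graph of diameter at most D. Let P_1, …, P_N be pairwise disjoint subsets of V(G) whose union is V(G), each inducing a connected subgraph of G, and for each i let G_i be the 1-hop extension of P_i in G. Then: (1) for every i, any two vertices of G_i are at distance at most kD + 2 in G_i (dilation at most kD+2); and (2) every edge of G belongs to at most two of the subgraphs G_1, …, G_N (congestion at most 2). In other words, the 1-hop extension yields a (kD+2, 2)-shortcut for the partition {P_1, …, P_N}. -/
/-- The closed neighborhood `N⁺(P) = P ∪ N(P)` of a vertex set `P`; this is the vertex
set of the 1-hop extension of `P`. -/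
def nbhdPlus {V : Type*} (G : SimpleGraph V) (P : Set V) : Set V :=
  P ∪ {v | ∃ p ∈ P, G.Adj p v}

/-!
Fix a part `P` with 1-hop extension `H`. The heart of the matter is `d_H(p, q) ≤ k · d_G(p, q)`
for `p, q ∈ P`; the dilation bound follows by attaching the single edges from `u` and `v` to `P`.

Cut a shortest `G`-path from `p` to `q` at its vertices in `P`. A remaining segment `p z ⋯ z' q`
has an inner path `τ` avoiding `P`; let `R` be a shortest path from `q` to `p` in `G[P]`. If
`|R| + 2 ≤ k|τ|`, the walk `z, p, R backwards, q, z'` is short enough. Otherwise the cycle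
`p z τ z' q R` is longer than `k`, so it has a chord, and since `τ` and `R` are shortest paths
the chord joins some `a ∈ τ` to some `b ∈ R`. Recurse on the two pieces `z ⋯ a` and `a ⋯ z'` of
`τ` with `b` as the new neighbour in `P`: each piece is shorter than `τ`, or equals `τ` and comes
with a pair of neighbours in `P` that is closer in `G[P]`.

Congestion: an edge `uv` lies in `H_i` only if `u ∈ P_i` or `v ∈ P_i`, and the parts are
disjoint.
-/

namespace SimpleGraph

variable {V : Type*} {G : SimpleGraph V} {P : Set V} {k : ℕ} {u v x y p q z z' : V}

lemma _root_.KChordal.not_isChordless (h : KChordal G k) {w : G.Walk v v}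
    (hw : w.IsCycle) (hlen : k < w.length) : ¬w.IsChordless := fun hc => by
  obtain ⟨a, b, ha, hb, hab, he⟩ := h v w hw hlen
  exact he (hc.mem_edges ha hb hab)

lemma edist_triangle4 {w : V} :
    G.edist u x ≤ G.edist u v + G.edist v w + G.edist w x :=
  SimpleGraph.edist_triangle.trans (add_le_add_left SimpleGraph.edist_triangle _)

namespace Walk

lemma length_takeUntil_add_length_dropUntil [DecidableEq V] (w : G.Walk u v)
    (h : x ∈ w.support) : (w.takeUntil x h).length + (w.dropUntil x h).length = w.length := by
  rw [← length_append, take_spec]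

lemma idxOf_le_idxOf_add_one_of_adj [DecidableEq V] {w : G.Walk u v}
    (hw : w.length = G.dist u v) {a b : V} (ha : a ∈ w.support) (hb : b ∈ w.support)
    (hab : G.Adj a b) : w.support.idxOf b ≤ w.support.idxOf a + 1 := by
  have hshortcut := dist_le ((w.takeUntil a ha).append (cons hab (w.dropUntil b hb)))
  have hidx := List.idxOf_lt_length_of_mem hb
  rw [length_support] at hidx
  simp only [length_append, length_cons, length_takeUntil, length_dropUntil] at hshortcut
  omega

lemma isChordless_of_length_eq_dist_s2 {w : G.Walk u v} (hw : w.length = G.dist u v) :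
    w.IsChordless := by
  classical
  refine isChordless_iff_forall_mem_edges.mpr fun a b ha hb hab => ?_
  have hba := idxOf_le_idxOf_add_one_of_adj hw ha hb hab
  have hab' := idxOf_le_idxOf_add_one_of_adj hw hb ha hab.symm
  have hb_lt := List.idxOf_lt_length_of_mem hb
  have ha_lt := List.idxOf_lt_length_of_mem ha
  rw [length_support] at ha_lt hb_lt
  have hne : w.support.idxOf a ≠ w.support.idxOf b := fun h =>
    hab.ne (by rw [← getVert_support_idxOf w ha, h, getVert_support_idxOf w hb])
  rw [mk_mem_edges_iff_exists]
  rcases (by omega : w.support.idxOf b = w.support.idxOf a + 1 ∨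
      w.support.idxOf a = w.support.idxOf b + 1) with h | h
  · exact ⟨w.support.idxOf a, by omega,
      by rw [← h, getVert_support_idxOf w ha, getVert_support_idxOf w hb]⟩
  · exact ⟨w.support.idxOf b, by omega,
      by rw [← h, getVert_support_idxOf w ha, getVert_support_idxOf w hb, Sym2.eq_swap]⟩

lemma length_takeUntil_eq_dist [DecidableEq V] {w : G.Walk u v} (hw : w.length = G.dist u v)
    (h : x ∈ w.support) : (w.takeUntil x h).length = G.dist u x := by
  have := (w.takeUntil x h).reachable.dist_triangle_left v
  have := dist_le (w.takeUntil x h)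
  have := dist_le (w.dropUntil x h)
  have := w.length_takeUntil_add_length_dropUntil h
  omega

lemma length_dropUntil_eq_dist [DecidableEq V] {w : G.Walk u v} (hw : w.length = G.dist u v)
    (h : x ∈ w.support) : (w.dropUntil x h).length = G.dist x v := by
  have := (w.takeUntil x h).reachable.dist_triangle_left v
  have := dist_le (w.takeUntil x h)
  have := dist_le (w.dropUntil x h)
  have := w.length_takeUntil_add_length_dropUntil h
  omega

lemma dist_lt_dist_of_mem_support_of_ne_right {w : G.Walk u v} (hw : w.length = G.dist u v)
    (h : x ∈ w.support) (hx : x ≠ v) : G.dist u x < G.dist u v := by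
  classical
  rw [← length_takeUntil_eq_dist hw h, ← hw]
  exact length_takeUntil_lt_length h hx

lemma dist_lt_dist_of_mem_support_of_ne_left {w : G.Walk u v} (hw : w.length = G.dist u v)
    (h : x ∈ w.support) (hx : x ≠ u) : G.dist x v < G.dist u v := by
  classical
  rw [← length_dropUntil_eq_dist hw h, ← hw]
  exact length_dropUntil_lt_length h hx

lemma isCycle_cons_append_cons (hpz : G.Adj p z) (hz'q : G.Adj z' q) {τ : G.Walk z z'}
    {R : G.Walk q p} (hτ : τ.IsPath) (hR : R.IsPath) (hτR : ∀ x ∈ τ.support, x ∉ R.support)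
    (hpq : p ≠ q) : (cons hpz (τ.append (cons hz'q R))).IsCycle := by
  refine (cons_isCycle_iff _ hpz).mpr ⟨?_, fun he => ?_⟩
  · rw [isPath_def, support_append, support_cons, List.tail_cons, List.nodup_append]
    exact ⟨hτ.support_nodup, hR.support_nodup, fun x hx y hy hxy => hτR x hx (hxy ▸ hy)⟩
  · rw [edges_append, edges_cons, List.mem_append, List.mem_cons] at he
    rcases he with he | he | he
    · exact hτR p (τ.fst_mem_support_of_mem_edges he) R.end_mem_support
    · rcases Sym2.eq_iff.mp he with ⟨rfl, -⟩ | ⟨h, -⟩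
      · exact hτR p τ.end_mem_support R.end_mem_support
      · exact hpq h
    · exact hτR z τ.start_mem_support (R.snd_mem_support_of_mem_edges he)

lemma exists_adj_of_not_isChordless_cons_append_cons (hpz : G.Adj p z) (hz'q : G.Adj z' q)
    {τ : G.Walk z z'} {R : G.Walk q p} (hτ : τ.IsChordless) (hR : R.IsChordless)
    (hW : ¬(cons hpz (τ.append (cons hz'q R))).IsChordless) :
    ∃ a ∈ τ.support, ∃ b ∈ R.support, G.Adj a b ∧ s(a, b) ≠ s(p, z) ∧ s(a, b) ≠ s(z', q) := by
  have hsupp : ∀ x ∈ (cons hpz (τ.append (cons hz'q R))).support,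
      x ∈ τ.support ∨ x ∈ R.support := by
    intro x hx
    simp only [support_cons, List.mem_cons, mem_support_append_iff] at hx
    rcases hx with rfl | hx | rfl | hx
    exacts [Or.inr R.end_mem_support, Or.inl hx, Or.inl τ.end_mem_support, Or.inr hx]
  simp only [isChordless_iff_forall_mem_edges, not_forall] at hW
  obtain ⟨a, b, ha, hb, hab, hnot⟩ := hW
  simp only [edges_cons, edges_append, List.mem_cons, List.mem_append, not_or] at hnot
  obtain ⟨hpz', hτ', hz'q', hR'⟩ := hnot
  rcases hsupp a ha with ha | ha <;> rcases hsupp b hb with hb | hb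
  · exact absurd (hτ.mem_edges ha hb hab) hτ'
  · exact ⟨a, ha, b, hb, hab, hpz', hz'q'⟩
  · exact ⟨b, hb, a, ha, hab.symm, by rwa [Sym2.eq_swap], by rwa [Sym2.eq_swap]⟩
  · exact absurd (hR.mem_edges ha hb hab) hR'

lemma exists_eq_cons_concat (w : G.Walk u v) (h : 2 ≤ w.length) :
    ∃ (x y : V) (hux : G.Adj u x) (τ : G.Walk x y) (hyv : G.Adj y v),
      w = cons hux (τ.concat hyv) := by
  cases w with
  | nil => simp at h
  | cons hux rest =>
    cases rest with
    | nil => simp at h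
    | cons hxy rest' =>
      obtain ⟨y, τ, hyv, e⟩ := exists_cons_eq_concat hxy rest'
      exact ⟨_, y, hux, τ, hyv, by rw [e]⟩

lemma length_eq_dist_of_cons_concat {hux : G.Adj u x} {τ : G.Walk x y} {hyv : G.Adj y v}
    (hw : (cons hux (τ.concat hyv)).length = G.dist u v) : τ.length = G.dist x y := by
  have h₁ := hux.reachable.dist_triangle_left v
  have h₂ := hyv.reachable.dist_triangle_right x
  rw [dist_eq_one_iff_adj.mpr hux] at h₁
  rw [dist_eq_one_iff_adj.mpr hyv] at h₂
  have := dist_le τ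
  rw [length_cons, length_concat] at hw
  omega

end Walk

open Walk

lemma edist_le_mul_dist_of_mem_support {H : SimpleGraph V} {w : G.Walk u v}
    (hw : w.length = G.dist u v) (hx : x ∈ w.support) (hux : H.edist u x ≤ k * G.dist u x)
    (hxv : H.edist x v ≤ k * G.dist x v) : H.edist u v ≤ k * G.dist u v := by
  classical
  calc H.edist u v ≤ H.edist u x + H.edist x v := SimpleGraph.edist_triangle
    _ ≤ k * G.dist u x + k * G.dist x v := add_le_add hux hxv
    _ = k * G.dist u v := by
      rw [← length_takeUntil_eq_dist hw hx, ← length_dropUntil_eq_dist hw hx, ← hw,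
        ← w.length_takeUntil_add_length_dropUntil hx]
      push_cast
      ring

lemma spanningCoe_induce_adj :
    (G.induce P).spanningCoe.Adj u v ↔ G.Adj u v ∧ u ∈ P ∧ v ∈ P := by
  simp [map_adj]

lemma spanningCoe_induce_le_oneHopExt : (G.induce P).spanningCoe ≤ oneHopExt G P :=
  fun _ _ h => ⟨(spanningCoe_induce_adj.mp h).1, Or.inl (spanningCoe_induce_adj.mp h).2.1⟩

lemma edist_oneHopExt_le_one (hp : p ∈ P) (h : G.Adj p z) :
    (oneHopExt G P).edist p z ≤ 1 :=
  edist_le_one_iff_adj_or_eq.mpr (Or.inl ⟨h, Or.inl hp⟩)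

lemma Preconnected.reachable_spanningCoe_induce (hP : (G.induce P).Preconnected) {a b : V}
    (ha : a ∈ P) (hb : b ∈ P) : (G.induce P).spanningCoe.Reachable a b :=
  (hP ⟨a, ha⟩ ⟨b, hb⟩).map (Embedding.spanningCoe _).toHom

lemma Walk.mem_of_mem_support_spanningCoe_induce
    (R : (G.induce P).spanningCoe.Walk u v) (hv : v ∈ P) (hx : x ∈ R.support) : x ∈ P := by
  induction R with
  | nil => exact (List.mem_singleton.mp hx) ▸ hv
  | cons h _ ih =>
    rcases List.mem_cons.mp hx with rfl | hx
    exacts [(spanningCoe_induce_adj.mp h).2.1, ih hv hx]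

lemma Walk.IsChordless.mapLe_spanningCoe_induce
    {R : (G.induce P).spanningCoe.Walk u v} (hR : R.IsChordless) (hv : v ∈ P) :
    (R.mapLe (spanningCoe_induce_le G P)).IsChordless := by
  rw [isChordless_iff_forall_mem_edges, support_mapLe_eq_support, edges_mapLe_eq_edges]
  intro a b ha hb hab
  exact hR.mem_edges ha hb (spanningCoe_induce_adj.mpr
    ⟨hab, R.mem_of_mem_support_spanningCoe_induce hv ha,
      R.mem_of_mem_support_spanningCoe_induce hv hb⟩)

lemma edist_oneHopExt_le_length_add_two (hp : p ∈ P) (hq : q ∈ P)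
    (hpz : G.Adj p z) (hz'q : G.Adj z' q) (R : (G.induce P).spanningCoe.Walk q p) :
    (oneHopExt G P).edist z z' ≤ R.length + 2 :=
  calc (oneHopExt G P).edist z z'
      ≤ (oneHopExt G P).edist z p + (oneHopExt G P).edist p q + (oneHopExt G P).edist q z' :=
        edist_triangle4
    _ ≤ 1 + R.length + 1 := by
        gcongr
        · exact edist_comm.trans_le (edist_oneHopExt_le_one hp hpz)
        · exact edist_comm.trans_le ((edist_anti spanningCoe_induce_le_oneHopExt).trans
            (edist_le R))
        · exact edist_oneHopExt_le_one hq hz'q.symm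
    _ = R.length + 2 := by ring

theorem _root_.KChordal.exists_adj_between_shortest_paths (hchordal : KChordal G k)
    (hp : p ∈ P) (hpq : p ≠ q) (hpz : G.Adj p z) (hz'q : G.Adj z' q)
    {τ : G.Walk z z'} (hτ : τ.length = G.dist z z') (hτP : ∀ x ∈ τ.support, x ∉ P)
    {R : (G.induce P).spanningCoe.Walk q p} (hR : R.length = (G.induce P).spanningCoe.dist q p)
    (hlong : k < τ.length + R.length + 2) :
    ∃ a ∈ τ.support, ∃ b ∈ R.support, G.Adj a b ∧ s(a, b) ≠ s(p, z) ∧ s(a, b) ≠ s(z', q) := by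
  set RG := R.mapLe (spanningCoe_induce_le G P)
  have hcycle : (cons hpz (τ.append (cons hz'q RG))).IsCycle :=
    isCycle_cons_append_cons hpz hz'q (τ.isPath_of_length_eq_dist hτ)
    ((R.isPath_of_length_eq_dist hR).mapLe _) (fun x hx hxR => hτP x hx
      (R.mem_of_mem_support_spanningCoe_induce hp (by rwa [support_mapLe_eq_support] at hxR)))
    hpq
  have hlong' : k < (cons hpz (τ.append (cons hz'q RG))).length := by
    simp only [length_cons, length_append, RG, length_mapLe]
    omega
  simpa only [RG, support_mapLe_eq_support] using
    exists_adj_of_not_isChordless_cons_append_cons hpz hz'q (isChordless_of_length_eq_dist_s2 hτ)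
      ((isChordless_of_length_eq_dist_s2 hR).mapLe_spanningCoe_induce hp)
      (hchordal.not_isChordless hcycle hlong')

theorem edist_oneHopExt_le_of_adj_of_adj (hk : 2 ≤ k) (hchordal : KChordal G k)
    (hP : (G.induce P).Preconnected) {p q z z' : V} (hp : p ∈ P) (hq : q ∈ P)
    (hpz : G.Adj p z) (hz'q : G.Adj z' q) (τ : G.Walk z z') (hτ : τ.length = G.dist z z')
    (hτP : ∀ x ∈ τ.support, x ∉ P) :
    (oneHopExt G P).edist z z' ≤ k * G.dist z z' := by
  classical
  obtain ⟨R, hR⟩ := (hP.reachable_spanningCoe_induce hq hp).exists_walk_length_eq_dist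
  rcases Nat.eq_zero_or_pos (G.dist z z') with hβ | hβ
  · obtain rfl : z = z' := eq_of_length_eq_zero (hτ.trans hβ)
    simp
  by_cases hshort : R.length + 2 ≤ k * G.dist z z'
  · exact (edist_oneHopExt_le_length_add_two hp hq hpz hz'q R).trans (by exact_mod_cast hshort)
  have hpq : p ≠ q := by
    rintro rfl
    have : k ≤ k * G.dist z z' := Nat.le_mul_of_pos_right k hβ
    rw [dist_self] at hR
    omega
  obtain ⟨a, haτ, b, hbR, hab, hbp, hbq⟩ := hchordal.exists_adj_between_shortest_paths hp hpq hpz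
    hz'q hτ hτP hR (by nlinarith [Nat.le_mul_of_pos_right k hβ])
  have hbP := R.mem_of_mem_support_spanningCoe_induce hp hbR
  have h₁ := edist_oneHopExt_le_of_adj_of_adj hk hchordal hP hp hbP hpz hab
    (τ.takeUntil a haτ) (length_takeUntil_eq_dist hτ haτ)
    (fun x hx => hτP x (τ.support_takeUntil_subset_support haτ hx))
  have h₂ := edist_oneHopExt_le_of_adj_of_adj hk hchordal hP hbP hq hab.symm hz'q
    (τ.dropUntil a haτ) (length_dropUntil_eq_dist hτ haτ)
    (fun x hx => hτP x (τ.support_dropUntil_subset_support haτ hx))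
  exact edist_le_mul_dist_of_mem_support hτ haτ h₁ h₂
termination_by (G.dist z z', (G.induce P).spanningCoe.dist q p)
decreasing_by
  all_goals rw [Prod.lex_def]
  · rcases eq_or_ne a z' with rfl | ha
    · exact Or.inr ⟨rfl, dist_lt_dist_of_mem_support_of_ne_left hR hbR fun h => hbq (h ▸ rfl)⟩
    · exact Or.inl (dist_lt_dist_of_mem_support_of_ne_right hτ haτ ha)
  · rcases eq_or_ne a z with rfl | ha
    · exact Or.inr ⟨rfl, dist_lt_dist_of_mem_support_of_ne_right hR hbR
        fun h => hbp (h ▸ Sym2.eq_swap)⟩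
    · exact Or.inl (dist_lt_dist_of_mem_support_of_ne_left hτ haτ ha)

theorem edist_oneHopExt_le_mul_length_cons_concat (hk : 2 ≤ k) (hchordal : KChordal G k)
    (hP : (G.induce P).Preconnected) (hp : p ∈ P) (hq : q ∈ P)
    (hpz : G.Adj p z) (hz'q : G.Adj z' q) (τ : G.Walk z z') (hτ : τ.length = G.dist z z')
    (hτP : ∀ x ∈ τ.support, x ∉ P) :
    (oneHopExt G P).edist p q ≤ k * (cons hpz (τ.concat hz'q)).length := by
  rw [length_cons, length_concat, hτ]
  calc (oneHopExt G P).edist p q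
      ≤ (oneHopExt G P).edist p z + (oneHopExt G P).edist z z' + (oneHopExt G P).edist z' q :=
        edist_triangle4
    _ ≤ 1 + k * G.dist z z' + 1 := by
        gcongr
        · exact edist_oneHopExt_le_one hp hpz
        · exact edist_oneHopExt_le_of_adj_of_adj hk hchordal hP hp hq hpz hz'q τ hτ hτP
        · exact edist_comm.trans_le (edist_oneHopExt_le_one hq hz'q.symm)
    _ ≤ k * (G.dist z z' + 1 + 1 : ℕ) := by
        exact_mod_cast (by nlinarith : 1 + k * G.dist z z' + 1 ≤ k * (G.dist z z' + 1 + 1))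

theorem edist_oneHopExt_le_mul_dist (hk : 2 ≤ k) (hchordal : KChordal G k)
    (hP : (G.induce P).Preconnected) {p q : V} (hp : p ∈ P) (hq : q ∈ P) :
    (oneHopExt G P).edist p q ≤ k * G.dist p q := by
  classical
  obtain ⟨π, hπ⟩ := ((hP.reachable_spanningCoe_induce hp hq).mono
    (spanningCoe_induce_le G P)).exists_walk_length_eq_dist
  by_cases hsplit : ∃ c ∈ π.support, c ∈ P ∧ c ≠ p ∧ c ≠ q
  · obtain ⟨c, hcπ, hcP, hcp, hcq⟩ := hsplit
    have h₁ := edist_oneHopExt_le_mul_dist hk hchordal hP hp hcP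
    have h₂ := edist_oneHopExt_le_mul_dist hk hchordal hP hcP hq
    exact edist_le_mul_dist_of_mem_support hπ hcπ h₁ h₂
  push Not at hsplit
  rcases lt_or_ge π.length 2 with hshort | hlong
  · obtain h0 | h1 : π.length = 0 ∨ π.length = 1 := by omega
    · obtain rfl := eq_of_length_eq_zero h0
      simp
    · calc (oneHopExt G P).edist p q ≤ 1 := edist_oneHopExt_le_one hp (adj_of_length_eq_one h1)
        _ ≤ k * G.dist p q := by
          rw [← hπ, h1]
          exact_mod_cast (by omega : 1 ≤ k * 1)
  obtain ⟨z, z', hpz, τ, hz'q, rfl⟩ := π.exists_eq_cons_concat hlong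
  obtain ⟨⟨hpτ, -⟩, -, hqτ⟩ :
      (p ∉ τ.support ∧ p ≠ q) ∧ τ.support.Nodup ∧ ∀ x ∈ τ.support, x ≠ q := by
    simpa [isPath_def, support_concat, List.nodup_append] using
      (cons hpz (τ.concat hz'q)).isPath_of_length_eq_dist hπ
  rw [← hπ]
  exact edist_oneHopExt_le_mul_length_cons_concat hk hchordal hP hp hq hpz hz'q τ
    (length_eq_dist_of_cons_concat hπ) fun x hx hxP =>
      hqτ x hx (hsplit x (by simp [support_concat, hx]) hxP (ne_of_mem_of_not_mem hx hpτ))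
termination_by G.dist p q
decreasing_by
  exacts [dist_lt_dist_of_mem_support_of_ne_right hπ hcπ hcq,
    dist_lt_dist_of_mem_support_of_ne_left hπ hcπ hcp]

lemma exists_mem_edist_oneHopExt_le_one (hu : u ∈ nbhdPlus G P) :
    ∃ p ∈ P, (oneHopExt G P).edist p u ≤ 1 := by
  rcases hu with hu | ⟨p, hp, hpu⟩
  · exact ⟨u, hu, by simp⟩
  · exact ⟨p, hp, edist_oneHopExt_le_one hp hpu⟩

theorem dist_oneHopExt_le_of_mem_nbhdPlus (hk : 2 ≤ k) (hchordal : KChordal G k)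
    (hP : (G.induce P).Preconnected) {D : ℕ} (hD : ∀ u v : V, G.dist u v ≤ D)
    (hu : u ∈ nbhdPlus G P) (hv : v ∈ nbhdPlus G P) :
    (oneHopExt G P).dist u v ≤ k * D + 2 := by
  obtain ⟨p, hp, hpu⟩ := exists_mem_edist_oneHopExt_le_one hu
  obtain ⟨q, hq, hqv⟩ := exists_mem_edist_oneHopExt_le_one hv
  refine ENat.toNat_le_of_le_natCast ?_
  calc (oneHopExt G P).edist u v
      ≤ (oneHopExt G P).edist u p + (oneHopExt G P).edist p q + (oneHopExt G P).edist q v :=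
        edist_triangle4
    _ ≤ 1 + k * G.dist p q + 1 := by
        gcongr
        · exact edist_comm.trans_le hpu
        · exact edist_oneHopExt_le_mul_dist hk hchordal hP hp hq
    _ ≤ (k * D + 2 : ℕ) := by
        exact_mod_cast (by nlinarith [hD p q] : 1 + k * G.dist p q + 1 ≤ k * D + 2)

open Function in
lemma ncard_setOf_oneHopExt_adj_le_two {ι : Type*} {P : ι → Set V}
    (hP : Pairwise (Disjoint on P)) : {i | (oneHopExt G (P i)).Adj u v}.ncard ≤ 2 := by
  have hsub (w : V) : {i | w ∈ P i}.Subsingleton := fun i hi j hj =>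
    hP.eq (Set.not_disjoint_iff.mpr ⟨w, hi, hj⟩)
  calc {i | (oneHopExt G (P i)).Adj u v}.ncard
      ≤ ({i | u ∈ P i} ∪ {i | v ∈ P i}).ncard :=
        Set.ncard_le_ncard (fun i hi => hi.2) ((hsub u).finite.union (hsub v).finite)
    _ ≤ {i | u ∈ P i}.ncard + {i | v ∈ P i}.ncard := Set.ncard_union_le _ _
    _ ≤ 1 + 1 := add_le_add ((Set.ncard_le_one (hsub u).finite).mpr (hsub u))
        ((Set.ncard_le_one (hsub v).finite).mpr (hsub v))

end SimpleGraph

theorem oneHopExt_shortcut_of_kChordal_general {V : Type*} (G : SimpleGraph V)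
    (k D N : ℕ) (hk : 3 ≤ k) (hchordal : KChordal G k)
    (hdiam : ∀ u v : V, G.dist u v ≤ D)
    (P : Fin N → Set V)
    (hdisj : ∀ i j : Fin N, i ≠ j → Disjoint (P i) (P j))
    (hpart : ∀ i, (G.induce (P i)).Connected) :
    (∀ i : Fin N, ∀ u ∈ nbhdPlus G (P i), ∀ v ∈ nbhdPlus G (P i),
        (oneHopExt G (P i)).dist u v ≤ k * D + 2) ∧
    (∀ u v : V, G.Adj u v →
        {i : Fin N | (oneHopExt G (P i)).Adj u v}.ncard ≤ 2) :=
  ⟨fun i _ hu _ hv => SimpleGraph.dist_oneHopExt_le_of_mem_nbhdPlus (by omega) hchordal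
      (hpart i).preconnected hdiam hu hv,
    fun _ _ _ => SimpleGraph.ncard_setOf_oneHopExt_adj_le_two hdisj⟩

/-- For a connected `k`-chordal graph `G` (`k ≥ 3`) of diameter at most `D` and a partition
of the vertex set into parts `P 1, …, P N`, each inducing a connected subgraph, the 1-hop
extensions `G_i = oneHopExt G (P i)` form a `(kD+2, 2)`-shortcut: (1) any two vertices of
`G_i` are at distance at most `kD + 2` in `G_i` (dilation), and (2) every edge of `G` lies
in at most two of the subgraphs `G_i` (congestion). -/
theorem oneHopExt_shortcut_of_kChordal {V : Type*} [Fintype V] (G : SimpleGraph V)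
    (k D N : ℕ) (hk : 3 ≤ k) (hconn : G.Connected) (hchordal : KChordal G k)
    (hdiam : ∀ u v : V, G.dist u v ≤ D)
    (P : Fin N → Set V)
    (hdisj : ∀ i j : Fin N, i ≠ j → Disjoint (P i) (P j))
    (hcover : (⋃ i, P i) = Set.univ)
    (hpart : ∀ i, (G.induce (P i)).Connected) :
    (∀ i : Fin N, ∀ u ∈ nbhdPlus G (P i), ∀ v ∈ nbhdPlus G (P i),
        (oneHopExt G (P i)).dist u v ≤ k * D + 2) ∧
    (∀ u v : V, G.Adj u v →
        {i : Fin N | (oneHopExt G (P i)).Adj u v}.ncard ≤ 2) :=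
  oneHopExt_shortcut_of_kChordal_general G k D N hk hchordal hdiam P hdisj hpart
end

section
/- Let k ≥ 4 be an even integer and set K = k/2 − 1, and let x ≥ 0 and N ≥ 2 be integers. Then the graph G(k,x,N) is k-chordal, i.e., G(k,x,N) contains no induced cycle of length greater than k. -/
/-- Vertices of the graph `G(k,x,N)`: pairs `(i,j)` with either `i = 1`, `0 ≤ j ≤ x`
(the first row) or `2 ≤ i ≤ N`, `0 ≤ j ≤ x·K` where `K = k/2 - 1` (the other rows). -/
def GkxNVertex (k x N : ℕ) : Type :=
  {p : ℕ × ℕ // (p.1 = 1 ∧ p.2 ≤ x) ∨ (2 ≤ p.1 ∧ p.1 ≤ N ∧ p.2 ≤ x * (k / 2 - 1))}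

/-- The (pre-symmetrization) edge relation of `G(k,x,N)`, with `K = k/2 - 1`:
`E₁`: consecutive vertices of row 1; `E₂`: consecutive vertices of a row `i ≥ 2`;
`E₃`: `v_{1,j}` joined to `v_{i,jK}` for `i ≥ 2`; `E₄`: `v_{i,h}` joined to `v_{j,h}`
for `i ≠ j ≥ 2` whenever `K ∣ h`. -/
def GkxNRel (k : ℕ) (p q : ℕ × ℕ) : Prop :=
  (p.1 = 1 ∧ q.1 = 1 ∧ q.2 = p.2 + 1) ∨
  (2 ≤ p.1 ∧ q.1 = p.1 ∧ q.2 = p.2 + 1) ∨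
  (p.1 = 1 ∧ 2 ≤ q.1 ∧ q.2 = p.2 * (k / 2 - 1)) ∨
  (2 ≤ p.1 ∧ 2 ≤ q.1 ∧ p.1 ≠ q.1 ∧ p.2 = q.2 ∧ (k / 2 - 1) ∣ p.2)

/-- The graph `G(k,x,N)`. -/
def GkxN (k x N : ℕ) : SimpleGraph (GkxNVertex k x N) :=
  SimpleGraph.fromRel (fun p q => GkxNRel k p.val q.val)

/-!
Write `K = k/2 - 1` and give `v_{1,j}` the level `jK` and `v_{i,j}` (`i ≥ 2`) the level `j`.
An edge either joins two vertices of one level divisible by `K`, or moves by `K` between two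
such levels (`E₁`), or moves by `1` inside a row (`E₂`); and all vertices of a level divisible
by `K` form a clique. On an induced cycle of length `L > k ≥ 4` such a clique therefore meets
the cycle in at most two vertices, consecutive on the cycle.

The lowest level `m` met by the cycle is divisible by `K`, since otherwise both cycle neighbours
of a lowest vertex would be the vertex just above it in its row. The cycle never rises above
`m + K`: it would cross that level twice at non-consecutive places, and the two crossing
vertices would form a chord. So the cycle lives on the levels `m, …, m + K`; it has at most two
vertices on each extreme level, and each vertex strictly in between lies on the row of a cycle
vertex of level `m`, so there are at most `2(K - 1)` of them. Hence `L ≤ 2K + 2 = k`.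
-/

theorem Nat.exists_pos_lt_eq_of_lt_of_lt {α : Type*} [LinearOrder α] {u : ℕ → α} {c : α}
    {n : ℕ} (hstep : ∀ e, u e < c → u (e + 1) ≤ c) (h0 : u 0 < c) (hn : c < u n) :
    ∃ p, 0 < p ∧ p < n ∧ u p = c := by
  have hex : ∃ p, c ≤ u p := ⟨n, hn.le⟩
  classical
  have hpos : Nat.find hex ≠ 0 := fun h => (h ▸ Nat.find_spec hex).not_gt h0
  have hprev : u (Nat.find hex - 1) < c := not_le.mp (Nat.find_min hex (by omega))
  have hle : u (Nat.find hex) ≤ c := by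
    simpa [Nat.sub_add_cancel (Nat.pos_of_ne_zero hpos)] using hstep _ hprev
  have heq : u (Nat.find hex) = c := le_antisymm hle (Nat.find_spec hex)
  exact ⟨Nat.find hex, Nat.pos_of_ne_zero hpos,
    lt_of_le_of_ne (Nat.find_min' hex hn.le) fun h => hn.ne' (h ▸ heq), heq⟩

theorem ZMod.natCast_ne_natCast_of_lt_of_lt {L a b : ℕ} (hab : a < b) (hba : b < a + L) :
    (a : ZMod L) ≠ b := by
  rw [ne_eq, ZMod.natCast_eq_natCast_iff, Nat.modEq_iff_dvd' hab.le]
  exact fun h => (Nat.le_of_dvd (by omega) h).not_gt (by omega)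

namespace SimpleGraph

variable {V : Type*} (G : SimpleGraph V)

structure IsInducedCycle {L : ℕ} (g : ZMod L → V) : Prop where
  injective : Function.Injective g
  adj_iff : ∀ i j, G.Adj (g i) (g j) ↔ j = i + 1 ∨ i = j + 1

variable {G}

theorem Walk.getVert_val_natCast {u : V} (w : G.Walk u u) {n : ℕ} (hn : n ≤ w.length) :
    w.getVert (n : ZMod w.length).val = w.getVert n := by
  rw [ZMod.val_natCast]
  rcases hn.lt_or_eq with h | rfl
  · rw [Nat.mod_eq_of_lt h]
  · rw [Nat.mod_self, getVert_zero, getVert_length]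

theorem Walk.IsCycle.isInducedCycle {u : V} {w : G.Walk u u} (hw : w.IsCycle)
    (hc : w.IsChordless) : G.IsInducedCycle (fun i : ZMod w.length => w.getVert i.val) := by
  have : NeZero w.length := ⟨by have := hw.three_le_length; omega⟩
  have hval : ∀ i : ZMod w.length, i.val ≤ w.length - 1 := fun i => by
    have := ZMod.val_lt i; omega
  have hinj : Function.Injective (fun i : ZMod w.length => w.getVert i.val) :=
    fun i j h => ZMod.val_injective _ (hw.getVert_injOn' (hval i) (hval j) h)
  have hsucc (i : ZMod w.length) : w.getVert (i + 1).val = w.getVert (i.val + 1) := by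
    rw [← w.getVert_val_natCast (ZMod.val_lt i), Nat.cast_succ, ZMod.natCast_zmod_val]
  refine ⟨hinj, fun i j => ⟨fun h => ?_, ?_⟩⟩
  · obtain ⟨n, hn, he⟩ := w.mk_mem_edges_iff_exists.mp
      (hc.mem_edges (w.getVert_mem_support _) (w.getVert_mem_support _) h)
    rw [← w.getVert_val_natCast hn.le, ← w.getVert_val_natCast hn, Sym2.eq_iff] at he
    rcases he with ⟨h1, h2⟩ | ⟨h1, h2⟩
    · left
      rw [← hinj h1, ← hinj h2, Nat.cast_succ]
    · right
      rw [← hinj h1, ← hinj h2, Nat.cast_succ]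
  · rintro (rfl | rfl)
    · simpa only [hsucc] using w.adj_getVert_succ (ZMod.val_lt i)
    · simpa only [hsucc] using (w.adj_getVert_succ (ZMod.val_lt j)).symm

namespace IsInducedCycle

variable {L : ℕ} {g : ZMod L → V}

theorem adj_succ (hg : G.IsInducedCycle g) (i : ZMod L) : G.Adj (g i) (g (i + 1)) :=
  (hg.adj_iff _ _).mpr (Or.inl rfl)

theorem adj_pred (hg : G.IsInducedCycle g) (i : ZMod L) : G.Adj (g i) (g (i - 1)) :=
  (hg.adj_iff _ _).mpr (Or.inr (sub_add_cancel i 1).symm)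

theorem succ_ne_pred (hg : G.IsInducedCycle g) (hL : 3 ≤ L) (i : ZMod L) :
    g (i + 1) ≠ g (i - 1) := by
  intro h
  have h2 : ((0 : ℕ) : ZMod L) = (2 : ℕ) := by
    push_cast
    linear_combination (hg.injective h).symm
  exact ZMod.natCast_ne_natCast_of_lt_of_lt (by norm_num) (by omega) h2

theorem not_adj_adj_adj (hg : G.IsInducedCycle g) (hL : 4 ≤ L) (i j l : ZMod L) :
    ¬ (G.Adj (g i) (g j) ∧ G.Adj (g i) (g l) ∧ G.Adj (g j) (g l)) := by
  rintro ⟨hij, hil, hjl⟩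
  have hjl' : j ≠ l := fun h => hjl.ne (congrArg g h)
  have h1 : ((0 : ℕ) : ZMod L) ≠ (1 : ℕ) :=
    ZMod.natCast_ne_natCast_of_lt_of_lt (by norm_num) (by omega)
  have h3 : ((0 : ℕ) : ZMod L) ≠ (3 : ℕ) :=
    ZMod.natCast_ne_natCast_of_lt_of_lt (by norm_num) (by omega)
  push_cast at h1 h3
  rcases (hg.adj_iff _ _).mp hij with hj | hj <;> rcases (hg.adj_iff _ _).mp hil with hl | hl <;>
    rcases (hg.adj_iff _ _).mp hjl with h | h <;>
    -- each case forces `1 = 0`, `3 = 0` or `j = l` in `ZMod L`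
    grind

theorem card_le_two_of_isClique (hg : G.IsInducedCycle g) (hL : 4 ≤ L) {s : Finset V}
    (hs : ↑s ⊆ Set.range g) (hclique : G.IsClique (s : Set V)) : s.card ≤ 2 := by
  by_contra! h
  obtain ⟨a, ha, b, hb, c, hc, hab, hac, hbc⟩ := Finset.two_lt_card.mp h
  obtain ⟨i, rfl⟩ := hs ha
  obtain ⟨j, rfl⟩ := hs hb
  obtain ⟨l, rfl⟩ := hs hc
  exact hg.not_adj_adj_adj hL i j l
    ⟨hclique ha hb hab, hclique ha hc hac, hclique hb hc hbc⟩

theorem ne_and_not_adj_of_add_two_le (hg : G.IsInducedCycle g) (i : ZMod L) {p q : ℕ}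
    (hpq : p + 2 ≤ q) (hqp : q + 2 ≤ p + L) :
    g (i + p) ≠ g (i + q) ∧ ¬ G.Adj (g (i + p)) (g (i + q)) := by
  refine ⟨fun h => ZMod.natCast_ne_natCast_of_lt_of_lt (L := L) (a := p) (b := q) (by omega)
    (by omega) (add_left_cancel (hg.injective h)), fun h => ?_⟩
  rcases (hg.adj_iff _ _).mp h with h | h
  · refine ZMod.natCast_ne_natCast_of_lt_of_lt (L := L) (a := p + 1) (b := q) (by omega)
      (by omega) ?_
    push_cast
    linear_combination -h
  · refine ZMod.natCast_ne_natCast_of_lt_of_lt (L := L) (a := q + 1) (b := p + L) (by omega)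
      (by omega) ?_
    push_cast
    linear_combination -h - ZMod.natCast_self L

theorem not_isClique_of_lt_of_lt [NeZero L] (hg : G.IsInducedCycle g) {α : Type*}
    [LinearOrder α] {f : V → α} {c : α} (hf : ∀ a b, G.Adj a b → f a < c → f b ≤ c)
    {i j : ZMod L} (hi : f (g i) < c) (hj : c < f (g j)) :
    ¬ G.IsClique (Set.range g ∩ f ⁻¹' {c}) := by
  intro hclique
  set n := (j - i).val
  have hnL : n < L := ZMod.val_lt _
  have hn : j = i + n := by simp [n]
  have hLn : i = j + ((L - n : ℕ) : ZMod L) := by simp [hn, Nat.cast_sub hnL.le]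
  obtain ⟨p, hp0, hpn, hp⟩ := Nat.exists_pos_lt_eq_of_lt_of_lt (n := n)
    (u := fun e => f (g (i + e)))
    (fun e he => by simpa [add_assoc] using hf _ _ (hg.adj_succ _) he) (by simpa using hi)
    (by simpa [← hn] using hj)
  -- the way back from `j` to `i` climbs through `c` in the order dual
  obtain ⟨q, hq0, hqn, hq⟩ := Nat.exists_pos_lt_eq_of_lt_of_lt (n := L - n)
    (u := fun e => OrderDual.toDual (f (g (j + e)))) (c := OrderDual.toDual c)
    (fun e he => OrderDual.toDual_le_toDual.mpr <| not_lt.mp fun h =>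
      (hf _ _ (hg.adj_succ (j + e)).symm (by simpa [add_assoc] using h)).not_gt he)
    (by simpa using hj) (by simpa [← hLn] using hi)
  obtain ⟨hne, hnadj⟩ := hg.ne_and_not_adj_of_add_two_le i (p := p) (q := n + q) (by omega)
    (by omega)
  refine hnadj (hclique ⟨⟨_, rfl⟩, hp⟩ ⟨⟨_, rfl⟩, ?_⟩ hne)
  simpa [hn, add_assoc] using hq

end IsInducedCycle

end SimpleGraph

namespace GkxN

variable {k x N : ℕ}

def level (p : GkxNVertex k x N) : ℕ :=
  if p.val.1 = 1 then p.val.2 * (k / 2 - 1) else p.val.2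

theorem row_eq_one_or_two_le (p : GkxNVertex k x N) : p.val.1 = 1 ∨ 2 ≤ p.val.1 :=
  p.property.imp And.left And.left

theorem level_of_row_eq_one {p : GkxNVertex k x N} (h : p.val.1 = 1) :
    level p = p.val.2 * (k / 2 - 1) :=
  if_pos h

theorem level_of_two_le_row {p : GkxNVertex k x N} (h : 2 ≤ p.val.1) : level p = p.val.2 :=
  if_neg (by omega)

theorem adj_cases {p q : GkxNVertex k x N} (h : (GkxN k x N).Adj p q) :
    (level p = level q ∧ k / 2 - 1 ∣ level p) ∨
    (k / 2 - 1 ∣ level p ∧ k / 2 - 1 ∣ level q ∧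
      (level q = level p + (k / 2 - 1) ∨ level p = level q + (k / 2 - 1))) ∨
    (2 ≤ p.val.1 ∧ q.val.1 = p.val.1 ∧
      (level q = level p + 1 ∨ level p = level q + 1)) := by
  obtain ⟨-, h | h⟩ := h <;>
    rcases h with ⟨_, _, _⟩ | ⟨_, _, _⟩ | ⟨_, _, _⟩ | ⟨_, _, _, _, _⟩ <;>
    simp (disch := omega) only [level_of_row_eq_one, level_of_two_le_row, add_mul, one_mul, *] <;>
    simp_all

theorem eq_of_row_eq_of_level_eq (hK : 0 < k / 2 - 1) {p q : GkxNVertex k x N}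
    (hrow : p.val.1 = q.val.1) (hlev : level p = level q) : p = q := by
  refine Subtype.ext (Prod.ext hrow ?_)
  rcases row_eq_one_or_two_le p with hp | hp
  · rw [level_of_row_eq_one hp, level_of_row_eq_one (hrow ▸ hp)] at hlev
    exact Nat.eq_of_mul_eq_mul_right hK hlev
  · rwa [level_of_two_le_row hp, level_of_two_le_row (hrow ▸ hp)] at hlev

theorem isClique_setOf_level (hK : 0 < k / 2 - 1) {c : ℕ} (hc : k / 2 - 1 ∣ c) :
    (GkxN k x N).IsClique {p | level p = c} := by
  intro p hp q hq hne
  have hpq : level p = level q := hp.trans hq.symm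
  refine ⟨hne, ?_⟩
  rcases row_eq_one_or_two_le p with hp1 | hp1 <;> rcases row_eq_one_or_two_le q with hq1 | hq1
  · exact absurd (eq_of_row_eq_of_level_eq hK (hp1.trans hq1.symm) hpq) hne
  · rw [level_of_row_eq_one hp1, level_of_two_le_row hq1] at hpq
    exact Or.inl (Or.inr (Or.inr (Or.inl ⟨hp1, hq1, hpq.symm⟩)))
  · rw [level_of_two_le_row hp1, level_of_row_eq_one hq1] at hpq
    exact Or.inr (Or.inr (Or.inr (Or.inl ⟨hq1, hp1, hpq⟩)))
  · by_cases hrow : p.val.1 = q.val.1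
    · exact absurd (eq_of_row_eq_of_level_eq hK hrow hpq) hne
    rw [level_of_two_le_row hp1, level_of_two_le_row hq1] at hpq
    have hdvd : k / 2 - 1 ∣ p.val.2 := level_of_two_le_row hp1 ▸ (hp : level p = c) ▸ hc
    exact Or.inl (Or.inr (Or.inr (Or.inr ⟨hp1, hq1, hrow, hpq, hdvd⟩)))

theorem level_le_of_adj {c : ℕ} (hc : k / 2 - 1 ∣ c) {p q : GkxNVertex k x N}
    (h : (GkxN k x N).Adj p q) (hp : level p < c) : level q ≤ c := by
  rcases adj_cases h with ⟨heq, -⟩ | ⟨hdvd, -, hstep | hstep⟩ | ⟨-, -, hstep | hstep⟩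
  · omega
  · have := Nat.le_of_dvd (by omega) (Nat.dvd_sub hc hdvd)
    omega
  all_goals omega

theorem row_eq_of_adj_of_not_dvd {p q : GkxNVertex k x N} (h : (GkxN k x N).Adj p q)
    (hp : ¬ k / 2 - 1 ∣ level p) :
    q.val.1 = p.val.1 ∧ (level q = level p + 1 ∨ level p = level q + 1) := by
  rcases adj_cases h with ⟨-, h⟩ | ⟨h, -⟩ | ⟨-, h⟩
  exacts [absurd h hp, absurd h hp, h]

section InducedCycle

variable {L : ℕ} {g : ZMod L → GkxNVertex k x N}

theorem exists_row_eq_level_add_one_eq (hK : 0 < k / 2 - 1)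
    (hg : (GkxN k x N).IsInducedCycle g) (hL : 3 ≤ L) {i : ZMod L}
    (hi : ¬ k / 2 - 1 ∣ level (g i)) :
    ∃ j, (g j).val.1 = (g i).val.1 ∧ level (g j) + 1 = level (g i) := by
  obtain ⟨hrow₁, hlev₁⟩ := row_eq_of_adj_of_not_dvd (hg.adj_succ i) hi
  obtain ⟨hrow₂, hlev₂⟩ := row_eq_of_adj_of_not_dvd (hg.adj_pred i) hi
  by_contra! h
  have h₁ := h (i + 1) hrow₁
  have h₂ := h (i - 1) hrow₂
  exact hg.succ_ne_pred hL i (eq_of_row_eq_of_level_eq hK (hrow₁.trans hrow₂.symm) (by omega))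

theorem dvd_level_of_forall_level_le (hK : 0 < k / 2 - 1)
    (hg : (GkxN k x N).IsInducedCycle g) (hL : 3 ≤ L) {i : ZMod L}
    (hmin : ∀ j, level (g i) ≤ level (g j)) : k / 2 - 1 ∣ level (g i) := by
  by_contra h
  obtain ⟨j, -, hj⟩ := exists_row_eq_level_add_one_eq hK hg hL h
  have := hmin j
  omega

theorem exists_row_eq_level_eq (hK : 0 < k / 2 - 1) (hg : (GkxN k x N).IsInducedCycle g)
    (hL : 3 ≤ L) {m : ℕ} (hm : k / 2 - 1 ∣ m) (hlo : ∀ j, m ≤ level (g j)) {i : ZMod L}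
    (hi : level (g i) < m + (k / 2 - 1)) :
    ∃ j, (g j).val.1 = (g i).val.1 ∧ level (g j) = m := by
  induction hd : level (g i) - m generalizing i with
  | zero => exact ⟨i, rfl, by have := hlo i; omega⟩
  | succ d ih =>
    have hnd : ¬ k / 2 - 1 ∣ level (g i) := fun h =>
      (Nat.le_of_dvd (by omega) (Nat.dvd_sub h hm)).not_gt (by omega)
    obtain ⟨j, hrow, hlev⟩ := exists_row_eq_level_add_one_eq hK hg hL hnd
    obtain ⟨j', hrow', hlev'⟩ := ih (i := j) (by omega) (by omega)
    exact ⟨j', hrow'.trans hrow, hlev'⟩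

open Classical in
theorem card_filter_level_eq_le_two [NeZero L] (hK : 0 < k / 2 - 1)
    (hg : (GkxN k x N).IsInducedCycle g) (hL : 4 ≤ L) {c : ℕ} (hc : k / 2 - 1 ∣ c) :
    ((Finset.univ.image g).filter (level · = c)).card ≤ 2 :=
  hg.card_le_two_of_isClique hL (fun p hp => by simpa using (Finset.mem_filter.mp hp).1)
    ((isClique_setOf_level hK hc).subset fun _ hp => (Finset.mem_filter.mp hp).2)

open Classical in
theorem card_filter_level_mem_Ioo_le [NeZero L] (hK : 0 < k / 2 - 1)
    (hg : (GkxN k x N).IsInducedCycle g) (hL : 3 ≤ L) {m : ℕ} (hm : k / 2 - 1 ∣ m)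
    (hlo : ∀ j, m ≤ level (g j)) :
    ((Finset.univ.image g).filter fun p => m < level p ∧ level p < m + (k / 2 - 1)).card ≤
      ((Finset.univ.image g).filter (level · = m)).card * (k / 2 - 1 - 1) := by
  set A := (Finset.univ.image g).filter (level · = m)
  calc _ ≤ (A.image (·.val.1) ×ˢ Finset.Ioo m (m + (k / 2 - 1))).card := by
        refine Finset.card_le_card_of_injOn (fun p => (p.val.1, level p)) (fun p hp => ?_)
          fun p _ q _ h => eq_of_row_eq_of_level_eq hK (Prod.ext_iff.mp h).1 (Prod.ext_iff.mp h).2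
        obtain ⟨hpS, hp⟩ := Finset.mem_filter.mp hp
        obtain ⟨i, -, rfl⟩ := Finset.mem_image.mp hpS
        obtain ⟨j, hrow, hj⟩ := exists_row_eq_level_eq hK hg hL hm hlo hp.2
        simp only [Finset.coe_product, Set.mem_prod, Finset.mem_coe, Finset.mem_Ioo]
        exact ⟨Finset.mem_image.mpr ⟨g j, Finset.mem_filter.mpr ⟨by simp, hj⟩, hrow⟩,
          hp⟩
    _ ≤ A.card * (k / 2 - 1 - 1) := by
        rw [Finset.card_product, Nat.card_Ioo, Nat.add_sub_cancel_left]
        exact Nat.mul_le_mul_right _ Finset.card_image_le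
    _ = _ := rfl

theorem length_le_of_forall_level_mem_Icc [NeZero L] (hK : 0 < k / 2 - 1)
    (hg : (GkxN k x N).IsInducedCycle g) (hL : 4 ≤ L) {m : ℕ} (hm : k / 2 - 1 ∣ m)
    (hlev : ∀ j, m ≤ level (g j) ∧ level (g j) ≤ m + (k / 2 - 1)) :
    L ≤ 2 * (k / 2 - 1) + 2 := by
  classical
  set S := Finset.univ.image g
  have hS : S.card = L := by
    rw [Finset.card_image_of_injective _ hg.injective, Finset.card_univ, ZMod.card]
  have hI := card_filter_level_mem_Ioo_le hK hg (by omega) hm fun j => (hlev j).1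
  have hm₂ := card_filter_level_eq_le_two hK hg hL hm
  have hM₂ := card_filter_level_eq_le_two hK hg hL (Nat.dvd_add hm (dvd_refl (k / 2 - 1)))
  calc L = S.card := hS.symm
    _ ≤ (S.filter (level · = m) ∪ S.filter (level · = m + (k / 2 - 1)) ∪
          S.filter fun p => m < level p ∧ level p < m + (k / 2 - 1)).card := by
        refine Finset.card_le_card fun p hp => ?_
        obtain ⟨i, -, rfl⟩ := Finset.mem_image.mp hp
        have := hlev i
        simp only [Finset.mem_union, Finset.mem_filter, hp, true_and]
        omega
    _ ≤ 2 + 2 + 2 * (k / 2 - 1 - 1) := by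
        refine (Finset.card_union_le _ _).trans (add_le_add ((Finset.card_union_le _ _).trans
          (add_le_add hm₂ hM₂)) (hI.trans (Nat.mul_le_mul_right _ hm₂)))
    _ = 2 * (k / 2 - 1) + 2 := by omega

theorem level_le_of_dvd_of_level_lt [NeZero L] (hK : 0 < k / 2 - 1)
    (hg : (GkxN k x N).IsInducedCycle g) {c : ℕ} (hc : k / 2 - 1 ∣ c) {i : ZMod L}
    (hi : level (g i) < c) (j : ZMod L) :
    level (g j) ≤ c := by
  by_contra! hj
  exact hg.not_isClique_of_lt_of_lt (fun _ _ hab ha => level_le_of_adj hc hab ha) hi hj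
    ((isClique_setOf_level hK hc).subset fun _ hp => hp.2)

theorem length_le_of_isInducedCycle (hk : 4 ≤ k) (hke : Even k)
    (hg : (GkxN k x N).IsInducedCycle g) : L ≤ k := by
  by_contra! hL
  have : NeZero L := ⟨by omega⟩
  have hK : 0 < k / 2 - 1 := by omega
  obtain ⟨i, hi⟩ := Finite.exists_min fun j => level (g j)
  have hm := dvd_level_of_forall_level_le hK hg (by omega) hi
  have hlev : ∀ j, level (g i) ≤ level (g j) ∧ level (g j) ≤ level (g i) + (k / 2 - 1) :=
    fun j => ⟨hi j, level_le_of_dvd_of_level_lt hK hg (Nat.dvd_add hm dvd_rfl) (i := i)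
      (by omega) j⟩
  have := length_le_of_forall_level_mem_Icc hK hg (by omega) hm hlev
  obtain ⟨r, rfl⟩ := hke
  omega

end InducedCycle

end GkxN

theorem GkxN_kchordal_general (k x N : ℕ) (hk : 4 ≤ k) (hke : Even k) :
    KChordal (GkxN k x N) k := by
  intro v w hw hlen
  by_contra hchord
  have hc : w.IsChordless := SimpleGraph.Walk.isChordless_iff_forall_mem_edges.mpr
    fun a b ha hb hab => by_contra fun he => hchord ⟨a, b, ha, hb, hab, he⟩
  exact hlen.not_ge (GkxN.length_le_of_isInducedCycle hk hke (hw.isInducedCycle hc))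

theorem GkxN_kchordal (k x N : ℕ) (hk : 4 ≤ k) (hke : Even k) (hN : 2 ≤ N) :
    KChordal (GkxN k x N) k :=
  GkxN_kchordal_general k x N hk hke
end

section
/- Let k ≥ 4 be an even integer and set K = k/2 − 1, and let x ≥ 0 and N ≥ 2 be integers. Then the graph G(k,x,N) is connected and its diameter is at most K + 1 + x. -/
/-!
Row 1 is a path `v_{1,0}, …, v_{1,x}` and every other row is a path of length `xK` whose vertex
`v_{i,aK}` is joined to `v_{1,a}`. Write the height of a vertex in a lower row as `h = qK + r`
with `r < K`: it is at distance at most `r + 1` from `v_{1,q}` and, when `r > 0`, at most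
`K - r + 1` from `v_{1,q+1}`. Two lower vertices with remainders `r, r'` are joined through row 1,
descending to `v_{1,q}, v_{1,q'}` when `r + r' < K` and ascending to `v_{1,q+1}, v_{1,q'+1}`
otherwise; in the second case `r, r' > 0` forces `q, q' < x`, which pays for the longer climb.
The edges `E₄` are never needed.
-/

theorem Nat.div_lt_of_le_mul_of_mod_pos {m n d : ℕ} (hd : 0 < d) (hm : m ≤ n * d)
    (hmod : 0 < m % d) : m / d < n :=
  (Nat.div_lt_iff_lt_mul hd).2 (hm.lt_of_ne fun e => by simp [e] at hmod)

namespace GkxN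

open SimpleGraph

variable {k x N : ℕ}

local notation "K" => k / 2 - 1

lemma adj_of_rel {u v : GkxNVertex k x N} (h : GkxNRel k u.1 v.1) : (GkxN k x N).Adj u v := by
  refine (fromRel_adj _ _ _).2 ⟨?_, .inl h⟩
  rintro rfl
  unfold GkxNRel at h
  omega

-- At `j = 0` this is `v` itself, by truncated subtraction.
def rowPred (v : GkxNVertex k x N) : GkxNVertex k x N :=
  ⟨(v.1.1, v.1.2 - 1), by obtain ⟨⟨i, j⟩, hv⟩ := v; dsimp only; omega⟩

lemma rowPred_adj {v : GkxNVertex k x N} (hv : 0 < v.1.2) : (GkxN k x N).Adj (rowPred v) v := by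
  obtain ⟨⟨i, j⟩, hi | hi⟩ := v <;> apply adj_of_rel
  · exact .inl ⟨hi.1, hi.1, by dsimp [rowPred] at *; omega⟩
  · exact .inr (.inl ⟨hi.1, rfl, by dsimp [rowPred] at *; omega⟩)

lemma exists_walk_of_row_eq {u v : GkxNVertex k x N} (h : u.1.1 = v.1.1) :
    ∃ p : (GkxN k x N).Walk u v, p.length = Nat.dist u.1.2 v.1.2 := by
  wlog huv : u.1.2 ≤ v.1.2 generalizing u v
  · obtain ⟨p, hp⟩ := this h.symm (by omega)
    exact ⟨p.reverse, by rw [Walk.length_reverse, hp, Nat.dist_comm]⟩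
  obtain ⟨n, hn⟩ : ∃ n, v.1.2 = u.1.2 + n := ⟨_, (Nat.add_sub_of_le huv).symm⟩
  induction n generalizing v with
  | zero =>
    obtain rfl : u = v := Subtype.ext (Prod.ext h (by omega))
    exact ⟨.nil, by simp⟩
  | succ n ih =>
    obtain ⟨p, hp⟩ := ih (v := rowPred v) h (by simp only [rowPred]; omega)
      (by simp only [rowPred]; omega)
    refine ⟨p.concat (rowPred_adj (by omega)), ?_⟩
    rw [Walk.length_concat, hp]
    simp only [rowPred, Nat.dist]
    omega

def rowOne (a : ℕ) (ha : a ≤ x) : GkxNVertex k x N := ⟨(1, a), .inl ⟨rfl, ha⟩⟩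

lemma exists_walk_rowOne_of_two_le {u : GkxNVertex k x N} (hu : 2 ≤ u.1.1) {a : ℕ} (ha : a ≤ x) :
    ∃ p : (GkxN k x N).Walk (rowOne a ha) u, p.length = 1 + Nat.dist (a * K) u.1.2 := by
  let w : GkxNVertex k x N :=
    ⟨(u.1.1, a * K), .inr ⟨hu, by have := u.2; omega, Nat.mul_le_mul_right _ ha⟩⟩
  have hw : (GkxN k x N).Adj (rowOne a ha) w := adj_of_rel (.inr (.inr (.inl ⟨rfl, hu, rfl⟩)))
  obtain ⟨p, hp⟩ := exists_walk_of_row_eq (u := w) (v := u) rfl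
  exact ⟨.cons hw p, by rw [Walk.length_cons, hp, add_comm]⟩

theorem connected : (GkxN k x N).Connected := by
  rw [connected_iff_exists_forall_reachable]
  refine ⟨rowOne 0 x.zero_le, fun u => ?_⟩
  rcases u.2 with hu | hu
  · obtain ⟨p, -⟩ := exists_walk_of_row_eq (u := rowOne 0 x.zero_le) (v := u) hu.1.symm
    exact p.reachable
  · obtain ⟨p, -⟩ := exists_walk_rowOne_of_two_le hu.1 x.zero_le
    exact p.reachable

lemma dist_le_of_row_eq {u v : GkxNVertex k x N} (h : u.1.1 = v.1.1) :
    (GkxN k x N).dist u v ≤ Nat.dist u.1.2 v.1.2 := by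
  obtain ⟨p, hp⟩ := exists_walk_of_row_eq h
  exact hp ▸ dist_le p

lemma snd_le_of_two_le {u : GkxNVertex k x N} (hu : 2 ≤ u.1.1) : u.1.2 ≤ x * K := by
  have := u.2
  omega

lemma snd_div_le_of_two_le {u : GkxNVertex k x N} (hu : 2 ≤ u.1.1) : u.1.2 / K ≤ x :=
  Nat.div_le_of_le_mul (mul_comm x K ▸ snd_le_of_two_le hu)

lemma dist_rowOne_div_le {u : GkxNVertex k x N} (hu : 2 ≤ u.1.1) :
    (GkxN k x N).dist (rowOne (u.1.2 / K) (snd_div_le_of_two_le hu)) u ≤ 1 + u.1.2 % K := by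
  obtain ⟨p, hp⟩ := exists_walk_rowOne_of_two_le hu (snd_div_le_of_two_le hu)
  have hdist : Nat.dist (u.1.2 / K * K) u.1.2 = u.1.2 % K := by
    have := Nat.div_add_mod' u.1.2 K
    rw [Nat.dist]
    omega
  exact hdist ▸ hp ▸ dist_le p

lemma dist_rowOne_div_add_one_le (hK : 0 < K) {u : GkxNVertex k x N} (hu : 2 ≤ u.1.1)
    (hr : 0 < u.1.2 % K) :
    (GkxN k x N).dist
        (rowOne (u.1.2 / K + 1) (Nat.div_lt_of_le_mul_of_mod_pos hK (snd_le_of_two_le hu) hr)) u ≤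
      1 + (K - u.1.2 % K) := by
  obtain ⟨p, hp⟩ := exists_walk_rowOne_of_two_le (a := u.1.2 / K + 1) hu
    (Nat.div_lt_of_le_mul_of_mod_pos hK (snd_le_of_two_le hu) hr)
  have hdist : Nat.dist ((u.1.2 / K + 1) * K) u.1.2 = K - u.1.2 % K := by
    have := Nat.div_add_mod' u.1.2 K
    have := Nat.mod_lt u.1.2 hK
    rw [Nat.dist, add_mul, one_mul]
    omega
  exact hdist ▸ hp ▸ dist_le p

lemma dist_le_dist_rowOne_add {u v : GkxNVertex k x N} {a b : ℕ} (ha : a ≤ x) (hb : b ≤ x) :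
    (GkxN k x N).dist u v ≤
      (GkxN k x N).dist (rowOne a ha) u + Nat.dist a b + (GkxN k x N).dist (rowOne b hb) v := by
  have hab : (GkxN k x N).dist (rowOne a ha) (rowOne b hb) ≤ Nat.dist a b :=
    dist_le_of_row_eq rfl
  calc (GkxN k x N).dist u v
      ≤ (GkxN k x N).dist u (rowOne a ha) + (GkxN k x N).dist (rowOne a ha) v :=
        connected.dist_triangle
    _ ≤ (GkxN k x N).dist (rowOne a ha) u + ((GkxN k x N).dist (rowOne a ha) (rowOne b hb) +
          (GkxN k x N).dist (rowOne b hb) v) := by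
        rw [dist_comm]
        exact Nat.add_le_add_left connected.dist_triangle _
    _ ≤ _ := by omega

lemma dist_le_of_fst_eq_one_of_two_le (hK : 0 < K) {u v : GkxNVertex k x N} (hu : u.1.1 = 1)
    (hux : u.1.2 ≤ x) (hv : 2 ≤ v.1.1) : (GkxN k x N).dist u v ≤ K + 1 + x := by
  have hq := snd_div_le_of_two_le hv
  have hr := Nat.mod_lt v.1.2 hK
  calc (GkxN k x N).dist u v
      ≤ (GkxN k x N).dist u (rowOne _ hq) + (GkxN k x N).dist (rowOne _ hq) v :=
        connected.dist_triangle
    _ ≤ Nat.dist u.1.2 (v.1.2 / K) + (1 + v.1.2 % K) :=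
        Nat.add_le_add (dist_le_of_row_eq hu) (dist_rowOne_div_le hv)
    _ ≤ K + 1 + x := by
        generalize v.1.2 / K = q at *
        rw [Nat.dist]
        omega

lemma dist_le_of_two_le (hK : 0 < K) {u v : GkxNVertex k x N} (hu : 2 ≤ u.1.1)
    (hv : 2 ≤ v.1.1) : (GkxN k x N).dist u v ≤ K + 1 + x := by
  have hru := Nat.mod_lt u.1.2 hK
  have hrv := Nat.mod_lt v.1.2 hK
  by_cases hsum : u.1.2 % K + v.1.2 % K < K
  · calc (GkxN k x N).dist u v
        ≤ (1 + u.1.2 % K) + Nat.dist (u.1.2 / K) (v.1.2 / K) + (1 + v.1.2 % K) :=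
          (dist_le_dist_rowOne_add _ _).trans
            (Nat.add_le_add (Nat.add_le_add_right (dist_rowOne_div_le hu) _)
              (dist_rowOne_div_le hv))
      _ ≤ K + 1 + x := by
          have := snd_div_le_of_two_le hu
          have := snd_div_le_of_two_le hv
          generalize u.1.2 / K = qu, v.1.2 / K = qv at *
          rw [Nat.dist]
          omega
  · have hu₀ : 0 < u.1.2 % K := by omega
    have hv₀ : 0 < v.1.2 % K := by omega
    have hqu := Nat.div_lt_of_le_mul_of_mod_pos hK (snd_le_of_two_le hu) hu₀
    have hqv := Nat.div_lt_of_le_mul_of_mod_pos hK (snd_le_of_two_le hv) hv₀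
    calc (GkxN k x N).dist u v
        ≤ (1 + (K - u.1.2 % K)) + Nat.dist (u.1.2 / K + 1) (v.1.2 / K + 1) +
            (1 + (K - v.1.2 % K)) :=
          (dist_le_dist_rowOne_add hqu hqv).trans
            (Nat.add_le_add (Nat.add_le_add_right (dist_rowOne_div_add_one_le hK hu hu₀) _)
              (dist_rowOne_div_add_one_le hK hv hv₀))
      _ ≤ K + 1 + x := by
          generalize u.1.2 / K = qu, v.1.2 / K = qv at *
          rw [Nat.dist]
          omega

theorem dist_le (hK : 0 < K) (u v : GkxNVertex k x N) : (GkxN k x N).dist u v ≤ K + 1 + x := by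
  rcases u.2 with ⟨hu, hux⟩ | ⟨hu, -⟩ <;> rcases v.2 with ⟨hv, hvx⟩ | ⟨hv, -⟩
  · have := dist_le_of_row_eq (hu.trans hv.symm)
    rw [Nat.dist] at this
    omega
  · exact dist_le_of_fst_eq_one_of_two_le hK hu hux hv
  · exact dist_comm.trans_le (dist_le_of_fst_eq_one_of_two_le hK hv hvx hu)
  · exact dist_le_of_two_le hK hu hv

end GkxN

theorem GkxN_connected_diam_general (k x N : ℕ) (hk : 4 ≤ k) :
    (GkxN k x N).Connected ∧
    ∀ u v : GkxNVertex k x N, (GkxN k x N).dist u v ≤ (k / 2 - 1) + 1 + x :=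
  ⟨GkxN.connected, GkxN.dist_le (by omega)⟩

/-- For an even `k ≥ 4`, `K = k/2 - 1`, `x ≥ 0`, `N ≥ 2`, the graph `G(k,x,N)` is
connected and its diameter is at most `K + 1 + x`. -/
theorem GkxN_connected_diam (k x N : ℕ) (hk : 4 ≤ k) (hke : Even k) (hN : 2 ≤ N) :
    (GkxN k x N).Connected ∧
    ∀ u v : GkxNVertex k x N, (GkxN k x N).dist u v ≤ (k / 2 - 1) + 1 + x :=
  GkxN_connected_diam_general k x N hk
end

section
/- Let G be a finite simple graph, let P ⊆ V(G), and let Ĝ be the 1-hop extension of P in G. Let W be a shortest path in Ĝ between two vertices of Ĝ, and let u_0, u_1, …, u_{c'} be the vertices of W that belong to P, listed in the order in which they appear along W. Then for all indices x and a with a ≥ 3 and x + a ≤ c', the closed neighborhoods N_G[u_x] and N_G[u_{x+a}] are disjoint; equivalently, dist_G(u_x, u_{x+a}) ≥ 3. -/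
/-- The closed neighborhood `N_G[v] = {v} ∪ N_G(v)` of a vertex. -/
def closedNbhd {V : Type*} (G : SimpleGraph V) (v : V) : Set V :=
  insert v (G.neighborSet v)

/-!
Along a shortest walk, vertices `k` steps apart are at distance at least `k`, by the triangle
inequality through the two ends. Every edge of `G` at a vertex of `P` is an edge of `Ĝ`, so two
vertices of `P` whose closed `G`-neighbourhoods meet are at distance at most `2` in `Ĝ`. The
vertices `u_x` and `u_{x+a}` are at least `a ≥ 3` steps apart along the walk.
-/

theorem List.Sublist.exists_getElem?_eq_add_le {α : Type*} {l l' : List α} (h : l.Sublist l')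
    (x a : ℕ) : ∃ i j, i + a ≤ j ∧ l[x]? = l'[i]? ∧ l[x + a]? = l'[j]? := by
  obtain ⟨f, hf⟩ := List.sublist_iff_exists_orderEmbedding_getElem?_eq.mp h
  refine ⟨f x, f (x + a), ?_, hf x, hf (x + a)⟩
  simpa only [add_comm] using f.strictMono.add_le_nat a x

namespace SimpleGraph

variable {V : Type*} {G : SimpleGraph V}

theorem Walk.support_getElem?_eq_some_iff {u v z : V} (p : G.Walk u v) (n : ℕ) :
    p.support[n]? = some z ↔ n ≤ p.length ∧ p.getVert n = z := by
  constructor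
  · intro h
    have hn : n ≤ p.length := by
      have := (List.getElem?_eq_some_iff.mp h).1
      rw [length_support] at this
      omega
    exact ⟨hn, Option.some_injective _ ((p.getVert_eq_support_getElem? hn).trans h)⟩
  · rintro ⟨hn, rfl⟩
    exact (p.getVert_eq_support_getElem? hn).symm

theorem Walk.sub_le_dist_getVert {u v : V} (p : G.Walk u v) (hp : p.length = G.dist u v)
    (i : ℕ) {j : ℕ} (hj : j ≤ p.length) :
    j - i ≤ G.dist (p.getVert i) (p.getVert j) := by
  have h₁ := (p.take i).reachable.dist_triangle_left v
  have h₂ := (p.drop j).reachable.dist_triangle_right (p.getVert i)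
  have h₃ := dist_le (p.take i)
  have h₄ := dist_le (p.drop j)
  rw [take_length] at h₃
  rw [drop_length] at h₄
  omega

end SimpleGraph

section OneHopExt

variable {V : Type*} {G : SimpleGraph V} {P : Set V} {u v z : V}

theorem oneHopExt_edist_le_one (hu : u ∈ P) (hz : z ∈ closedNbhd G u) :
    (oneHopExt G P).edist u z ≤ 1 := by
  rw [SimpleGraph.edist_le_one_iff_adj_or_eq]
  rcases hz with rfl | hadj
  · exact .inr rfl
  · exact .inl ⟨hadj, .inl hu⟩

theorem oneHopExt_dist_le_two (hu : u ∈ P) (hv : v ∈ P)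
    (h : ¬Disjoint (closedNbhd G u) (closedNbhd G v)) : (oneHopExt G P).dist u v ≤ 2 := by
  obtain ⟨z, hzu, hzv⟩ := Set.not_disjoint_iff.mp h
  refine ENat.toNat_le_of_le_natCast ?_
  calc (oneHopExt G P).edist u v
      ≤ (oneHopExt G P).edist u z + (oneHopExt G P).edist v z := by
        rw [SimpleGraph.edist_comm (u := v)]; exact SimpleGraph.edist_triangle
    _ ≤ 1 + 1 := add_le_add (oneHopExt_edist_le_one hu hzu) (oneHopExt_edist_le_one hv hzv)
    _ = 2 := by norm_num

end OneHopExt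

/-- Let `Ĝ` be the 1-hop extension of `P` in `G`, `w` a shortest path in `Ĝ`, and
`u_0, …, u_{c'}` the vertices of `w` lying in `P`, in order along `w`. Then for `a ≥ 3`
and `x + a ≤ c'`, the closed neighborhoods `N_G[u_x]` and `N_G[u_{x+a}]` are disjoint. -/
theorem oneHopExt_shortest_path_spread {V : Type*} (G : SimpleGraph V)
    (P : Set V) [DecidablePred (· ∈ P)]
    (s t : V) (w : (oneHopExt G P).Walk s t)
    (hshortest : w.length = (oneHopExt G P).dist s t)
    (x a : ℕ) (ha : 3 ≤ a)
    (hxa : x + a < (w.support.filter (fun z => decide (z ∈ P))).length) :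
    Disjoint
      (closedNbhd G ((w.support.filter (fun z => decide (z ∈ P))).get
        ⟨x, by omega⟩))
      (closedNbhd G ((w.support.filter (fun z => decide (z ∈ P))).get
        ⟨x + a, hxa⟩)) := by
  set L := w.support.filter (fun z => decide (z ∈ P))
  have hLP : ∀ k (hk : k < L.length), L[k] ∈ P := fun k hk => by
    simpa using List.of_mem_filter (L.getElem_mem hk)
  obtain ⟨i, j, hij, hi, hj⟩ :=
    (List.filter_sublist : L.Sublist w.support).exists_getElem?_eq_add_le x a
  rw [List.getElem?_eq_getElem (by omega), eq_comm, w.support_getElem?_eq_some_iff] at hi hj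
  simp only [List.get_eq_getElem, ← hi.2, ← hj.2]
  by_contra hmeet
  have hnear := oneHopExt_dist_le_two (hi.2 ▸ hLP x (by omega)) (hj.2 ▸ hLP (x + a) hxa) hmeet
  have hfar := w.sub_le_dist_getVert hshortest i hj.1
  omega
end

section
/- Let G be a finite simple graph, let P ⊆ V(G) be nonempty with the induced subgraph G[P] connected, and let Ĝ be the 1-hop extension of P in G. Let s be a vertex of Ĝ and let c ≥ 1 be an integer such that some vertex of Ĝ is at distance exactly c from s in Ĝ. Then there exists a set T ⊆ P such that: (1) 6·|T| ≥ c; (2) dist_Ĝ(s, x) ≤ c for every x ∈ T; and (3) for any two distinct x, y ∈ T, the closed neighborhoods N_G[x] and N_G[y] are disjoint. -/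
open Finset

namespace SimpleGraph.Walk

variable {V : Type*} {G : SimpleGraph V} {u v : V}

theorem dist_getVert_getVert_of_length_eq_dist {p : G.Walk u v} (hp : p.length = G.dist u v)
    {i j : ℕ} (hij : i ≤ j) (hj : j ≤ p.length) :
    G.dist (p.getVert i) (p.getVert j) = j - i := by
  have hsub : ((p.drop i).take (j - i)).IsSubwalk p :=
    (isSubwalk_take _ _).trans (isSubwalk_drop _ _)
  have h := length_eq_dist_of_subwalk hp hsub
  rw [take_length, drop_length, drop_getVert, Nat.add_sub_cancel' hij] at h
  rw [← h]
  exact min_eq_left (by omega)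

theorem exists_getVert_mem_of_isVertexCover {P : Set V} (hP : G.IsVertexCover P)
    (p : G.Walk u v) {i : ℕ} (hi : i < p.length) :
    ∃ j, i ≤ j ∧ j ≤ i + 1 ∧ p.getVert j ∈ P :=
  (hP (p.adj_getVert_succ hi)).elim (fun h ↦ ⟨i, le_rfl, by omega, h⟩)
    (fun h ↦ ⟨i + 1, by omega, le_rfl, h⟩)

theorem exists_finset_spaced_of_isVertexCover [DecidableEq V] {P : Set V} (hP : G.IsVertexCover P)
    {p : G.Walk u v} (hp : p.length = G.dist u v) {r : ℕ} (hr : 2 ≤ r) :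
    ∃ T : Finset V, ↑T ⊆ P ∧ p.length ≤ r * #T ∧ (∀ x ∈ T, G.dist u x ≤ p.length) ∧
      ∀ x ∈ T, ∀ y ∈ T, x ≠ y → r - 1 ≤ G.dist x y := by
  have hr₀ : 0 < r := by omega
  set m := p.length ⌈/⌉ r
  have hm : ∀ k < m, r * k < p.length := fun k hk ↦
    not_le.mp fun h ↦ ((ceilDiv_le_iff_le_mul hr₀).2 h).not_gt hk
  choose f hf using fun k : Fin m ↦ exists_getVert_mem_of_isVertexCover hP p (hm k k.2)
  have hlen (k : Fin m) : f k ≤ p.length := by have := hm k k.2; have := hf k; omega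
  have hspread {k l : Fin m} (hkl : k < l) :
      r - 1 ≤ G.dist (p.getVert (f k)) (p.getVert (f l)) := by
    have hrl := Nat.mul_le_mul_left r (Nat.succ_le_of_lt (Fin.lt_def.mp hkl))
    have := hf k
    have := hf l
    rw [Nat.mul_succ] at hrl
    rw [dist_getVert_getVert_of_length_eq_dist hp (by omega) (hlen l)]
    omega
  have hsep {k l : Fin m} (hkl : k ≠ l) : r - 1 ≤ G.dist (p.getVert (f k)) (p.getVert (f l)) := by
    rcases hkl.lt_or_gt with h | h
    · exact hspread h
    · rw [dist_comm]; exact hspread h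
  have hinj : Function.Injective fun k ↦ p.getVert (f k) := fun k l hkl ↦ by
    by_contra hne
    have := hsep hne
    simp only [hkl, SimpleGraph.dist_self] at this
    omega
  refine ⟨univ.image fun k ↦ p.getVert (f k), ?_, ?_, ?_, ?_⟩
  · simpa [Set.subset_def] using fun k ↦ (hf k).2.2
  · rw [card_image_of_injective _ hinj, card_fin]
    exact (ceilDiv_le_iff_le_mul hr₀).1 le_rfl
  · simp only [mem_image, mem_univ, true_and, forall_exists_index, forall_apply_eq_imp_iff]
    intro k
    simpa using (dist_getVert_getVert_of_length_eq_dist hp (Nat.zero_le _) (hlen k)).trans_le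
      (hlen k)
  · simp only [mem_image, mem_univ, true_and, forall_exists_index, forall_apply_eq_imp_iff]
    exact fun k l hkl ↦ hsep fun h ↦ hkl (h ▸ rfl)

end SimpleGraph.Walk

theorem isVertexCover_oneHopExt {V : Type*} (G : SimpleGraph V) (P : Set V) :
    (oneHopExt G P).IsVertexCover P :=
  fun _ _ h ↦ h.2

theorem dist_oneHopExt_le_two_of_not_disjoint {V : Type*} {G : SimpleGraph V} {P : Set V}
    {x y : V} (hx : x ∈ P) (hy : y ∈ P)
    (h : ¬Disjoint (closedNbhd G x) (closedNbhd G y)) : (oneHopExt G P).dist x y ≤ 2 := by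
  obtain ⟨z, hxz, hyz⟩ := Set.not_disjoint_iff.mp h
  rcases hxz with hzx | hxz <;> rcases hyz with hzy | hyz
  · obtain rfl : x = y := hzx.symm.trans hzy
    simp
  · have hadj : (oneHopExt G P).Adj x y := ⟨(hzx ▸ hyz : G.Adj y x).symm, Or.inl hx⟩
    exact (SimpleGraph.dist_le hadj.toWalk).trans (by simp)
  · have hadj : (oneHopExt G P).Adj x y := ⟨hzy ▸ hxz, Or.inl hx⟩
    exact (SimpleGraph.dist_le hadj.toWalk).trans (by simp)
  · have hxz' : (oneHopExt G P).Adj x z := ⟨hxz, Or.inl hx⟩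
    have hzy : (oneHopExt G P).Adj z y := ⟨hyz.symm, Or.inr hy⟩
    exact (SimpleGraph.dist_le (.cons hxz' hzy.toWalk)).trans (by simp)

theorem terminal_set_exists_general {V : Type*} (G : SimpleGraph V)
    (P : Set V)
    (s : V)
    (c : ℕ) (hc : 1 ≤ c) (hfar : ∃ v : V, (oneHopExt G P).dist s v = c) :
    ∃ T : Set V, T ⊆ P ∧ T.Finite ∧ c ≤ 6 * T.ncard ∧
      (∀ x ∈ T, (oneHopExt G P).dist s x ≤ c) ∧
      (∀ x ∈ T, ∀ y ∈ T, x ≠ y → Disjoint (closedNbhd G x) (closedNbhd G y)) := by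
  classical
  obtain ⟨v, hv⟩ := hfar
  obtain ⟨p, hp⟩ := SimpleGraph.exists_walk_of_dist_ne_zero (hv ▸ (by omega : c ≠ 0))
  obtain ⟨T, hTP, hcard, hdist, hsep⟩ :=
    p.exists_finset_spaced_of_isVertexCover (isVertexCover_oneHopExt G P) hp (r := 6) le_add_self
  rw [hp, hv] at hcard hdist
  refine ⟨T, hTP, T.finite_toSet, by rwa [Set.ncard_coe_finset], hdist, fun x hx y hy hxy ↦ ?_⟩
  by_contra h
  have := hsep x hx y hy hxy
  have := dist_oneHopExt_le_two_of_not_disjoint (hTP hx) (hTP hy) h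
  omega

/-- Existence of terminal sets: if `Ĝ` is the 1-hop extension of a nonempty connected
set `P`, `s` a vertex of `Ĝ`, and some vertex of `Ĝ` is at distance exactly `c ≥ 1`
from `s` in `Ĝ`, then there is a set `T ⊆ P` with `6|T| ≥ c`, all of whose elements are
within distance `c` of `s` in `Ĝ` and have pairwise disjoint closed neighborhoods
in `G`. -/
theorem terminal_set_exists {V : Type*} [Fintype V] (G : SimpleGraph V)
    (P : Set V) (hPne : P.Nonempty) (hPconn : (G.induce P).Connected)
    (s : V) (hs : s ∈ nbhdPlus G P)
    (c : ℕ) (hc : 1 ≤ c) (hfar : ∃ v : V, (oneHopExt G P).dist s v = c) :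
    ∃ T : Set V, T ⊆ P ∧ T.Finite ∧ c ≤ 6 * T.ncard ∧
      (∀ x ∈ T, (oneHopExt G P).dist s x ≤ c) ∧
      (∀ x ∈ T, ∀ y ∈ T, x ≠ y → Disjoint (closedNbhd G x) (closedNbhd G y)) :=
  terminal_set_exists_general G P s c hc hfar
end

section
/- Let G be a connected finite simple graph of diameter at most 3. Let T_0, T_1 ⊆ V(G) be sets such that for any two distinct x, y ∈ T_0 the closed neighborhoods N_G[x] and N_G[y] are disjoint, the same holds within T_1, and N_G[T_0] ∩ N_G[T_1] = ∅. Then: (i) for every a ∈ T_0 and b ∈ T_1, dist_G(a,b) = 3; and (ii) for any function assigning to each pair (a,b) ∈ T_0 × T_1 a path a, x_{ab}, y_{ab}, b of length 3 in G, the map sending (a,b) to the middle edge {x_{ab}, y_{ab}} is injective; in particular there exist at least |T_0|·|T_1| distinct edges of G, each of which is the middle edge of some length-3 path from a vertex of T_0 to a vertex of T_1. -/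
/-- The closed neighborhood `N_G[S] = ⋃_{v ∈ S} N_G[v]` of a set of vertices. -/
def closedNbhdSet {V : Type*} (G : SimpleGraph V) (S : Set V) : Set V :=
  ⋃ v ∈ S, closedNbhd G v

private lemma walk_le_two {V : Type*} {G : SimpleGraph V} {a b : V} (w : G.Walk a b)
    (h : w.length ≤ 2) : a = b ∨ G.Adj a b ∨ ∃ c, G.Adj a c ∧ G.Adj c b := by
  match w with
  | .nil => exact Or.inl rfl
  | .cons h1 .nil => exact Or.inr (Or.inl h1)
  | .cons h1 (.cons h2 .nil) => exact Or.inr (Or.inr ⟨_, h1, h2⟩)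
  | .cons h1 (.cons h2 (.cons h3 w')) => simp [SimpleGraph.Walk.length_cons] at h

private lemma walk_eq_three {V : Type*} {G : SimpleGraph V} {a b : V} (w : G.Walk a b)
    (h : w.length = 3) : ∃ p q, G.Adj a p ∧ G.Adj p q ∧ G.Adj q b := by
  match w with
  | .cons h1 (.cons h2 (.cons h3 .nil)) => exact ⟨_, _, h1, h2, h3⟩
  | .nil => simp at h
  | .cons h1 .nil => simp at h
  | .cons h1 (.cons h2 .nil) => simp at h
  | .cons h1 (.cons h2 (.cons h3 (.cons h4 w'))) =>
      simp [SimpleGraph.Walk.length_cons] at h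

/-- Let `G` be connected of diameter at most 3, and `T₀, T₁` sets of vertices with
pairwise disjoint closed neighborhoods within each set and `N[T₀] ∩ N[T₁] = ∅`. Then
(i) every `a ∈ T₀` and `b ∈ T₁` are at distance exactly 3; (ii) for any assignment to
every pair `(a,b) ∈ T₀ × T₁` of a length-3 path `a, X a b, Y a b, b`, the middle-edge
map `(a,b) ↦ s(X a b, Y a b)` is injective; in particular (iii) there are at least
`|T₀|·|T₁|` distinct edges of `G`, each the middle edge of some length-3 path from a
vertex of `T₀` to a vertex of `T₁`. -/
theorem diameter_three_middle_edges {V : Type*} [Fintype V] (G : SimpleGraph V)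
    (hconn : G.Connected) (hdiam : ∀ u v : V, G.dist u v ≤ 3)
    (T₀ T₁ : Set V)
    (h₀ : ∀ x ∈ T₀, ∀ y ∈ T₀, x ≠ y → Disjoint (closedNbhd G x) (closedNbhd G y))
    (h₁ : ∀ x ∈ T₁, ∀ y ∈ T₁, x ≠ y → Disjoint (closedNbhd G x) (closedNbhd G y))
    (h₀₁ : Disjoint (closedNbhdSet G T₀) (closedNbhdSet G T₁)) :
    (∀ a ∈ T₀, ∀ b ∈ T₁, G.dist a b = 3) ∧
    (∀ X Y : V → V → V,
      (∀ a ∈ T₀, ∀ b ∈ T₁,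
        G.Adj a (X a b) ∧ G.Adj (X a b) (Y a b) ∧ G.Adj (Y a b) b ∧
        a ≠ Y a b ∧ a ≠ b ∧ X a b ≠ b) →
      ∀ a ∈ T₀, ∀ b ∈ T₁, ∀ a' ∈ T₀, ∀ b' ∈ T₁,
        s(X a b, Y a b) = s(X a' b', Y a' b') → a = a' ∧ b = b') ∧
    (T₀.ncard * T₁.ncard ≤
      {e : Sym2 V | e ∈ G.edgeSet ∧ ∃ a ∈ T₀, ∃ b ∈ T₁, ∃ p q : V,
        e = s(p, q) ∧ G.Adj a p ∧ G.Adj p q ∧ G.Adj q b ∧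
        a ≠ q ∧ a ≠ b ∧ p ≠ b}.ncard) := by
  classical
  -- separation between closed neighborhoods of T₀ and T₁ vertices
  have hsep : ∀ a ∈ T₀, ∀ b ∈ T₁, ∀ v, v ∈ closedNbhd G a → v ∉ closedNbhd G b := by
    intro a ha b hb v hva hvb
    have h1 : v ∈ closedNbhdSet G T₀ := Set.mem_biUnion ha hva
    have h2 : v ∈ closedNbhdSet G T₁ := Set.mem_biUnion hb hvb
    exact (h₀₁.ne_of_mem h1 h2) rfl
  have hself : ∀ v : V, v ∈ closedNbhd G v := fun v => Set.mem_insert _ _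
  have hadjmem : ∀ {u v : V}, G.Adj u v → v ∈ closedNbhd G u := by
    intro u v h; exact Set.mem_insert_of_mem _ h
  -- (i)
  have hdist3 : ∀ a ∈ T₀, ∀ b ∈ T₁, G.dist a b = 3 := by
    intro a ha b hb
    have hle := hdiam a b
    rcases Nat.lt_or_ge (G.dist a b) 3 with hlt | hge
    · exfalso
      obtain ⟨w, hw⟩ := hconn.exists_walk_length_eq_dist a b
      have hw2 : w.length ≤ 2 := by omega
      rcases walk_le_two w hw2 with heq | hadj | ⟨c, h1, h2⟩
      · exact hsep a ha b hb a (hself a) (by rw [← heq]; exact hself a)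
      · exact hsep a ha b hb b (hadjmem hadj) (hself b)
      · exact hsep a ha b hb c (hadjmem h1) (hadjmem h2.symm)
    · omega
  -- (ii)
  have hinj : ∀ X Y : V → V → V,
      (∀ a ∈ T₀, ∀ b ∈ T₁,
        G.Adj a (X a b) ∧ G.Adj (X a b) (Y a b) ∧ G.Adj (Y a b) b ∧
        a ≠ Y a b ∧ a ≠ b ∧ X a b ≠ b) →
      ∀ a ∈ T₀, ∀ b ∈ T₁, ∀ a' ∈ T₀, ∀ b' ∈ T₁,
        s(X a b, Y a b) = s(X a' b', Y a' b') → a = a' ∧ b = b' := by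
    intro X Y hXY a ha b hb a' ha' b' hb' heq
    obtain ⟨hx, hxy, hy, -, -, -⟩ := hXY a ha b hb
    obtain ⟨hx', hxy', hy', -, -, -⟩ := hXY a' ha' b' hb'
    rw [Sym2.eq_iff] at heq
    rcases heq with ⟨hXX, hYY⟩ | ⟨hXY1, hYX1⟩
    · constructor
      · by_contra hne
        exact (h₀ a ha a' ha' hne).ne_of_mem (hadjmem hx) (hadjmem (hXX ▸ hx')) rfl
      · by_contra hne
        exact (h₁ b hb b' hb' hne).ne_of_mem (hadjmem hy.symm) (hadjmem (hYY ▸ hy'.symm)) rfl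
    · exfalso
      exact hsep a ha b' hb' (X a b) (hadjmem hx) (hXY1 ▸ hadjmem hy'.symm)
  refine ⟨hdist3, hinj, ?_⟩
  -- (iii)
  have hex : ∀ a ∈ T₀, ∀ b ∈ T₁, ∃ p q : V,
      G.Adj a p ∧ G.Adj p q ∧ G.Adj q b ∧ a ≠ q ∧ a ≠ b ∧ p ≠ b := by
    intro a ha b hb
    obtain ⟨w, hw⟩ := hconn.exists_walk_length_eq_dist a b
    rw [hdist3 a ha b hb] at hw
    obtain ⟨p, q, h1, h2, h3⟩ := walk_eq_three w hw
    refine ⟨p, q, h1, h2, h3, ?_, ?_, ?_⟩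
    · intro h
      exact hsep a ha b hb b (hadjmem (by rw [h]; exact h3)) (hself b)
    · intro h
      exact hsep a ha b hb a (hself a) (by rw [← h]; exact hself a)
    · intro h
      exact hsep a ha b hb p (hadjmem h1) (by rw [h]; exact hself b)
  set S := {e : Sym2 V | e ∈ G.edgeSet ∧ ∃ a ∈ T₀, ∃ b ∈ T₁, ∃ p q : V,
        e = s(p, q) ∧ G.Adj a p ∧ G.Adj p q ∧ G.Adj q b ∧
        a ≠ q ∧ a ≠ b ∧ p ≠ b} with hS
  have hexd : ∀ c : V × V, c ∈ T₀ ×ˢ T₁ → ∃ pq : V × V,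
      G.Adj c.1 pq.1 ∧ G.Adj pq.1 pq.2 ∧ G.Adj pq.2 c.2 ∧ c.1 ≠ pq.2 ∧ c.1 ≠ c.2 ∧ pq.1 ≠ c.2 := by
    rintro ⟨a, b⟩ ⟨ha, hb⟩
    obtain ⟨p, q, h1, h2, h3, h4, h5, h6⟩ := hex a ha b hb
    exact ⟨⟨p, q⟩, h1, h2, h3, h4, h5, h6⟩
  choose! PQ hPQ using hexd
  set X : V → V → V := fun a b => (PQ (a, b)).1 with hXdef
  set Y : V → V → V := fun a b => (PQ (a, b)).2 with hYdef
  have hXY : ∀ a ∈ T₀, ∀ b ∈ T₁,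
      G.Adj a (X a b) ∧ G.Adj (X a b) (Y a b) ∧ G.Adj (Y a b) b ∧
      a ≠ Y a b ∧ a ≠ b ∧ X a b ≠ b := by
    intro a ha b hb
    exact hPQ (a, b) ⟨ha, hb⟩
  have hmaps : ∀ c ∈ T₀ ×ˢ T₁, s(X c.1 c.2, Y c.1 c.2) ∈ S := by
    rintro ⟨a, b⟩ ⟨ha, hb⟩
    obtain ⟨h1, h2, h3, h4, h5, h6⟩ := hXY a ha b hb
    exact ⟨h2, a, ha, b, hb, X a b, Y a b, rfl, h1, h2, h3, h4, h5, h6⟩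
  have hinjOn : Set.InjOn (fun c : V × V => s(X c.1 c.2, Y c.1 c.2)) (T₀ ×ˢ T₁) := by
    rintro ⟨a, b⟩ ⟨ha, hb⟩ ⟨a', b'⟩ ⟨ha', hb'⟩ heq
    obtain ⟨h1, h2⟩ := hinj X Y hXY a ha b hb a' ha' b' hb' heq
    simp [h1, h2]
  have hcard : (T₀ ×ˢ T₁).ncard ≤ S.ncard :=
    Set.ncard_le_ncard_of_injOn _ hmaps hinjOn (Set.toFinite S)
  have hprod : (T₀ ×ˢ T₁).ncard = T₀.ncard * T₁.ncard := by
    rw [← Nat.card_coe_set_eq, ← Nat.card_coe_set_eq, ← Nat.card_coe_set_eq,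
      Nat.card_congr (Equiv.Set.prod T₀ T₁), Nat.card_prod]
  omega
end

section
/- Let G be a connected finite simple graph of diameter at most 4. Let T_0, T_1 ⊆ V(G) be nonempty sets with |T_0| = |T_1| = t such that for any two distinct x, y ∈ T_0 the closed neighborhoods N_G[x] and N_G[y] are disjoint, the same holds within T_1, and N_G[T_0] ∩ N_G[T_1] = ∅. Then: (i) for every (u,v) ∈ T_0 × T_1 there exists a length-2 path (a, b, c) in G (i.e., {a,b} and {b,c} edges of G, a ≠ c) with a ∈ N_G[u] and c ∈ N_G[v]; (ii) for any choice of such a path P(u,v) for every pair (u,v) ∈ T_0 × T_1, every edge of G lies on at most 2t of the chosen paths; and (iii) there exists a subset S ⊆ T_0 × T_1 with |S| ≥ t² / (4t + 1) such that the paths P(u,v) for (u,v) ∈ S are pairwise edge-disjoint. -/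
/-- Greedy independent-set lemma: if every element of `F` conflicts with at most `K`
elements of `F` (including itself), then there is a conflict-free `S ⊆ F` with
`|F| ≤ K * |S|`. -/
lemma greedy_indep {α : Type*} [DecidableEq α] (R : α → α → Prop) [DecidableRel R]
    (hsym : ∀ a b, R a b → R b a) (hrefl : ∀ a, R a a) (K : ℕ) :
    ∀ F : Finset α, (∀ a ∈ F, (F.filter (fun b => R a b)).card ≤ K) →
    ∃ S : Finset α, S ⊆ F ∧ F.card ≤ K * S.card ∧
      ∀ p ∈ S, ∀ q ∈ S, p ≠ q → ¬ R p q := by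
  intro F
  induction F using Finset.strongInduction with
  | _ F ih =>
    intro hF
    rcases F.eq_empty_or_nonempty with rfl | ⟨a, ha⟩
    · exact ⟨∅, by simp, by simp, by simp⟩
    · have hfilt : (F.filter (fun b => R a b)) ⊆ F := Finset.filter_subset _ _
      have hane : a ∈ F.filter (fun b => R a b) := Finset.mem_filter.2 ⟨ha, hrefl a⟩
      have hss : F \ F.filter (fun b => R a b) ⊂ F := Finset.sdiff_ssubset hfilt ⟨a, hane⟩
      have hF'card : (F \ F.filter (fun b => R a b)).card + (F.filter (fun b => R a b)).card
          = F.card := Finset.card_sdiff_add_card_eq_card hfilt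
      obtain ⟨S', hS'sub, hS'card, hS'ind⟩ := ih _ hss (fun b hb =>
        le_trans (Finset.card_le_card
          (Finset.filter_subset_filter _ (Finset.sdiff_subset))) (hF b (Finset.mem_sdiff.1 hb).1))
      have hanotinS' : a ∉ S' := fun h => (Finset.mem_sdiff.1 (hS'sub h)).2 hane
      refine ⟨insert a S', Finset.insert_subset ha (hS'sub.trans Finset.sdiff_subset), ?_, ?_⟩
      · rw [Finset.card_insert_of_notMem hanotinS', Nat.mul_add, Nat.mul_one]
        have := hF a ha
        omega
      · intro p hp q hq hpq
        rcases Finset.mem_insert.1 hp with rfl | hp' <;> rcases Finset.mem_insert.1 hq with rfl | hq'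
        · exact absurd rfl hpq
        · intro hR
          exact (Finset.mem_sdiff.1 (hS'sub hq')).2
            (Finset.mem_filter.2 ⟨(Finset.mem_sdiff.1 (hS'sub hq')).1, hR⟩)
        · intro hR
          exact (Finset.mem_sdiff.1 (hS'sub hp')).2
            (Finset.mem_filter.2 ⟨(Finset.mem_sdiff.1 (hS'sub hp')).1, hsym _ _ hR⟩)
        · exact hS'ind p hp' q hq' hpq

lemma aux_ncard_prod {α β : Type*} (s : Set α) (t : Set β) (hs : s.Finite) (ht : t.Finite) :
    (s ×ˢ t).ncard = s.ncard * t.ncard := by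
  rw [Set.ncard_eq_toFinset_card _ (hs.prod ht), ← Set.Finite.toFinset_prod hs ht,
    Finset.card_product, Set.ncard_eq_toFinset_card _ hs, Set.ncard_eq_toFinset_card _ ht]

/-- Let `G` be connected of diameter at most 4, and `T₀, T₁` nonempty sets of size `t`
with pairwise disjoint closed neighborhoods within each set and `N[T₀] ∩ N[T₁] = ∅`.
Then (i) for every `(u,v) ∈ T₀ × T₁` there is a length-2 path `(a,b,c)` with
`a ∈ N[u]`, `c ∈ N[v]`; (ii) for any choice of such paths, every edge of `G` lies on at
most `2t` of the chosen paths; and (iii) there is a subset `S ⊆ T₀ × T₁` of size at least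
`t²/(4t+1)` whose chosen paths are pairwise edge-disjoint. -/
theorem diameter_four_paths {V : Type*} [Fintype V] (G : SimpleGraph V)
    (hconn : G.Connected) (hdiam : ∀ u v : V, G.dist u v ≤ 4)
    (T₀ T₁ : Set V) (t : ℕ) (h₀ne : T₀.Nonempty) (h₁ne : T₁.Nonempty)
    (hT₀ : T₀.ncard = t) (hT₁ : T₁.ncard = t)
    (h₀ : ∀ x ∈ T₀, ∀ y ∈ T₀, x ≠ y → Disjoint (closedNbhd G x) (closedNbhd G y))
    (h₁ : ∀ x ∈ T₁, ∀ y ∈ T₁, x ≠ y → Disjoint (closedNbhd G x) (closedNbhd G y))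
    (h₀₁ : Disjoint (closedNbhdSet G T₀) (closedNbhdSet G T₁)) :
    (∀ u ∈ T₀, ∀ v ∈ T₁, ∃ a b c : V,
      G.Adj a b ∧ G.Adj b c ∧ a ≠ c ∧ a ∈ closedNbhd G u ∧ c ∈ closedNbhd G v) ∧
    (∀ A B C : V → V → V,
      (∀ u ∈ T₀, ∀ v ∈ T₁,
        G.Adj (A u v) (B u v) ∧ G.Adj (B u v) (C u v) ∧ A u v ≠ C u v ∧
        A u v ∈ closedNbhd G u ∧ C u v ∈ closedNbhd G v) →
      (∀ e ∈ G.edgeSet,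
        {uv : V × V | uv.1 ∈ T₀ ∧ uv.2 ∈ T₁ ∧
          (e = s(A uv.1 uv.2, B uv.1 uv.2) ∨ e = s(B uv.1 uv.2, C uv.1 uv.2))}.ncard
          ≤ 2 * t) ∧
      (∃ S : Set (V × V), S ⊆ T₀ ×ˢ T₁ ∧
        (t : ℝ) ^ 2 / (4 * t + 1) ≤ S.ncard ∧
        ∀ p ∈ S, ∀ q ∈ S, p ≠ q →
          Disjoint
            ({s(A p.1 p.2, B p.1 p.2), s(B p.1 p.2, C p.1 p.2)} : Set (Sym2 V))
            ({s(A q.1 q.2, B q.1 q.2), s(B q.1 q.2, C q.1 q.2)} : Set (Sym2 V)))) := by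
  classical
  have hmem_self : ∀ w : V, w ∈ closedNbhd G w := fun w => Set.mem_insert _ _
  have hmem_adj : ∀ w x : V, G.Adj w x → x ∈ closedNbhd G w :=
    fun w x h => Set.mem_insert_of_mem _ h
  have hsub₀ : ∀ u ∈ T₀, closedNbhd G u ⊆ closedNbhdSet G T₀ := fun u hu =>
    Set.subset_biUnion_of_mem hu
  have hsub₁ : ∀ v ∈ T₁, closedNbhd G v ⊆ closedNbhdSet G T₁ := fun v hv =>
    Set.subset_biUnion_of_mem hv
  have hNuv : ∀ u ∈ T₀, ∀ v ∈ T₁, Disjoint (closedNbhd G u) (closedNbhd G v) :=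
    fun u hu v hv => h₀₁.mono (hsub₀ u hu) (hsub₁ v hv)
  constructor
  · -- Part (i)
    intro u hu v hv
    have hdisj := hNuv u hu v hv
    obtain ⟨p, hp⟩ := hconn.exists_walk_length_eq_dist u v
    have hle : p.length ≤ 4 := hp ▸ hdiam u v
    have h3 : 3 ≤ p.length := by
      by_contra h
      push_neg at h
      have hx1u : p.getVert 1 ∈ closedNbhd G u := by
        rcases Nat.eq_zero_or_pos p.length with h0 | h0
        · have h01 : p.getVert 1 = v := p.getVert_of_length_le (by omega)
          have h00 : p.getVert 0 = v := p.getVert_of_length_le (by omega)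
          rw [h01, ← h00, p.getVert_zero]; exact hmem_self u
        · exact hmem_adj _ _ (by simpa using p.adj_getVert_succ (i := 0) h0)
      have hx1v : p.getVert 1 ∈ closedNbhd G v := by
        rcases Nat.lt_or_ge p.length 2 with h2 | h2
        · rw [p.getVert_of_length_le (by omega)]; exact hmem_self v
        · have hl2 : p.length = 2 := by omega
          have hadj := p.adj_getVert_succ (i := 1) (by omega)
          norm_num at hadj
          have h2v : p.getVert 2 = v := by rw [← hl2]; exact p.getVert_length
          rw [h2v] at hadj
          exact hmem_adj _ _ hadj.symm
      exact (Set.disjoint_left.1 hdisj hx1u) hx1v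
    have hab := p.adj_getVert_succ (i := 1) (by omega)
    have hbc := p.adj_getVert_succ (i := 2) (by omega)
    norm_num at hab hbc
    have ha : p.getVert 1 ∈ closedNbhd G u := by
      have := p.adj_getVert_succ (i := 0) (by omega)
      simp only [SimpleGraph.Walk.getVert_zero, Nat.zero_add] at this
      exact hmem_adj _ _ this
    have hc : p.getVert 3 ∈ closedNbhd G v := by
      rcases (by omega : p.length = 3 ∨ p.length = 4) with h | h
      · rw [show (3 : ℕ) = p.length from h.symm, p.getVert_length]; exact hmem_self v
      · have hadj := p.adj_getVert_succ (i := 3) (by omega)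
        norm_num at hadj
        rw [show (4 : ℕ) = p.length from h.symm, p.getVert_length] at hadj
        exact hmem_adj _ _ hadj.symm
    refine ⟨p.getVert 1, p.getVert 2, p.getVert 3, hab, hbc, ?_, ha, hc⟩
    intro he
    exact (Set.disjoint_left.1 hdisj ha) (he ▸ hc)
  · intro A B C hABC
    have part2 : ∀ e ∈ G.edgeSet,
        {uv : V × V | uv.1 ∈ T₀ ∧ uv.2 ∈ T₁ ∧
          (e = s(A uv.1 uv.2, B uv.1 uv.2) ∨ e = s(B uv.1 uv.2, C uv.1 uv.2))}.ncard
          ≤ 2 * t := by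
      intro e he
      induction e using Sym2.ind with
      | _ x y =>
      set P : V → Set (V × V) := fun z =>
        {uv | uv.1 ∈ T₀ ∧ uv.2 ∈ T₁ ∧ s(x, y) = s(A uv.1 uv.2, B uv.1 uv.2) ∧ A uv.1 uv.2 = z}
        with hPdef
      set Q : V → Set (V × V) := fun z =>
        {uv | uv.1 ∈ T₀ ∧ uv.2 ∈ T₁ ∧ s(x, y) = s(B uv.1 uv.2, C uv.1 uv.2) ∧ C uv.1 uv.2 = z}
        with hQdef
      have hP : ∀ z, (P z).ncard ≤ t := by
        intro z
        rw [← hT₁]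
        refine Set.ncard_le_ncard_of_injOn Prod.snd (fun a ha => ha.2.1) ?_ (Set.toFinite _)
        rintro ⟨u1, v1⟩ h1 ⟨u2, v2⟩ h2 hsnd
        simp only [hPdef, Set.mem_setOf_eq] at h1 h2
        simp only at hsnd
        subst hsnd
        have hz1 : z ∈ closedNbhd G u1 := h1.2.2.2 ▸ (hABC u1 h1.1 v1 h1.2.1).2.2.2.1
        have hz2 : z ∈ closedNbhd G u2 := h2.2.2.2 ▸ (hABC u2 h2.1 v1 h2.2.1).2.2.2.1
        have : u1 = u2 := by
          by_contra hne
          exact (Set.disjoint_left.1 (h₀ u1 h1.1 u2 h2.1 hne) hz1) hz2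
        rw [this]
      have hQ : ∀ z, (Q z).ncard ≤ t := by
        intro z
        rw [← hT₀]
        refine Set.ncard_le_ncard_of_injOn Prod.fst (fun a ha => ha.1) ?_ (Set.toFinite _)
        rintro ⟨u1, v1⟩ h1 ⟨u2, v2⟩ h2 hfst
        simp only [hQdef, Set.mem_setOf_eq] at h1 h2
        simp only at hfst
        subst hfst
        have hz1 : z ∈ closedNbhd G v1 := h1.2.2.2 ▸ (hABC u1 h1.1 v1 h1.2.1).2.2.2.2
        have hz2 : z ∈ closedNbhd G v2 := h2.2.2.2 ▸ (hABC u1 h2.1 v2 h2.2.1).2.2.2.2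
        have : v1 = v2 := by
          by_contra hne
          exact (Set.disjoint_left.1 (h₁ v1 h1.2.1 v2 h2.2.1 hne) hz1) hz2
        rw [this]
      have hPQ : ∀ z, (P z ∪ Q z).ncard ≤ t := by
        intro z
        rcases Set.eq_empty_or_nonempty (Q z) with hQe | ⟨q, hq⟩
        · rw [hQe, Set.union_empty]; exact hP z
        · have hzT₁ : z ∈ closedNbhdSet G T₁ := by
            simp only [hQdef, Set.mem_setOf_eq] at hq
            exact hsub₁ q.2 hq.2.1 (hq.2.2.2 ▸ (hABC q.1 hq.1 q.2 hq.2.1).2.2.2.2)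
          have hPe : P z = ∅ := by
            rw [Set.eq_empty_iff_forall_notMem]
            rintro p hp
            simp only [hPdef, Set.mem_setOf_eq] at hp
            have hzT₀ : z ∈ closedNbhdSet G T₀ :=
              hsub₀ p.1 hp.1 (hp.2.2.2 ▸ (hABC p.1 hp.1 p.2 hp.2.1).2.2.2.1)
            exact (Set.disjoint_left.1 h₀₁ hzT₀) hzT₁
          rw [hPe, Set.empty_union]; exact hQ z
      have hcover : {uv : V × V | uv.1 ∈ T₀ ∧ uv.2 ∈ T₁ ∧
          (s(x,y) = s(A uv.1 uv.2, B uv.1 uv.2) ∨ s(x,y) = s(B uv.1 uv.2, C uv.1 uv.2))}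
          ⊆ (P x ∪ Q x) ∪ (P y ∪ Q y) := by
        rintro uv ⟨hu, hv, hor⟩
        rcases hor with h | h
        · rcases Sym2.eq_iff.1 h with ⟨hx, _⟩ | ⟨_, hy⟩
          · exact Or.inl (Or.inl ⟨hu, hv, h, hx.symm⟩)
          · exact Or.inr (Or.inl ⟨hu, hv, h, hy.symm⟩)
        · rcases Sym2.eq_iff.1 h with ⟨_, hy⟩ | ⟨hx, _⟩
          · exact Or.inr (Or.inr ⟨hu, hv, h, hy.symm⟩)
          · exact Or.inl (Or.inr ⟨hu, hv, h, hx.symm⟩)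
      calc {uv : V × V | uv.1 ∈ T₀ ∧ uv.2 ∈ T₁ ∧
          (s(x,y) = s(A uv.1 uv.2, B uv.1 uv.2) ∨ s(x,y) = s(B uv.1 uv.2, C uv.1 uv.2))}.ncard
          ≤ ((P x ∪ Q x) ∪ (P y ∪ Q y)).ncard := Set.ncard_le_ncard hcover (Set.toFinite _)
        _ ≤ (P x ∪ Q x).ncard + (P y ∪ Q y).ncard := Set.ncard_union_le _ _
        _ ≤ t + t := Nat.add_le_add (hPQ x) (hPQ y)
        _ = 2 * t := by omega
    refine ⟨part2, ?_⟩
    set E : V × V → Set (Sym2 V) := fun p => {s(A p.1 p.2, B p.1 p.2), s(B p.1 p.2, C p.1 p.2)}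
      with hEdef
    set R : V × V → V × V → Prop := fun p q => ¬ Disjoint (E p) (E q) with hRdef
    have hsym : ∀ p q, R p q → R q p := fun p q h hd => h hd.symm
    have hrefl : ∀ p, R p p := fun p =>
      Set.not_disjoint_iff.2 ⟨s(A p.1 p.2, B p.1 p.2), Set.mem_insert _ _, Set.mem_insert _ _⟩
    have hfinF : (T₀ ×ˢ T₁ : Set (V × V)).Finite := Set.toFinite _
    set F : Finset (V × V) := hfinF.toFinset with hFdef
    have hconf : ∀ p ∈ F, (F.filter (fun q => R p q)).card ≤ 4 * t := by
      intro p hp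
      have hpmem : p ∈ T₀ ×ˢ T₁ := hfinF.mem_toFinset.1 hp
      obtain ⟨hadj1, hadj2, _, _, _⟩ := hABC p.1 hpmem.1 p.2 hpmem.2
      have hsubset : (↑(F.filter (fun q => R p q)) : Set (V × V)) ⊆
          {uv : V × V | uv.1 ∈ T₀ ∧ uv.2 ∈ T₁ ∧
            (s(A p.1 p.2, B p.1 p.2) = s(A uv.1 uv.2, B uv.1 uv.2) ∨
             s(A p.1 p.2, B p.1 p.2) = s(B uv.1 uv.2, C uv.1 uv.2))} ∪
          {uv : V × V | uv.1 ∈ T₀ ∧ uv.2 ∈ T₁ ∧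
            (s(B p.1 p.2, C p.1 p.2) = s(A uv.1 uv.2, B uv.1 uv.2) ∨
             s(B p.1 p.2, C p.1 p.2) = s(B uv.1 uv.2, C uv.1 uv.2))} := by
        intro q hq
        simp only [Finset.coe_filter, Set.mem_setOf_eq] at hq
        obtain ⟨hqF, hR⟩ := hq
        have hqmem : q ∈ T₀ ×ˢ T₁ := hfinF.mem_toFinset.1 hqF
        obtain ⟨s, hsp, hsq⟩ := Set.not_disjoint_iff.1 hR
        have hsq' : s = s(A q.1 q.2, B q.1 q.2) ∨ s = s(B q.1 q.2, C q.1 q.2) := hsq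
        rcases (hsp : s = s(A p.1 p.2, B p.1 p.2) ∨ s = s(B p.1 p.2, C p.1 p.2)) with rfl | rfl
        · exact Or.inl ⟨hqmem.1, hqmem.2, hsq'⟩
        · exact Or.inr ⟨hqmem.1, hqmem.2, hsq'⟩
      calc (F.filter (fun q => R p q)).card
          = (↑(F.filter (fun q => R p q)) : Set (V × V)).ncard :=
            (Set.ncard_coe_finset _).symm
        _ ≤ _ := Set.ncard_le_ncard hsubset (Set.toFinite _)
        _ ≤ 2 * t + 2 * t := le_trans (Set.ncard_union_le _ _)
            (Nat.add_le_add (part2 _ hadj1) (part2 _ hadj2))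
        _ = 4 * t := by omega
    obtain ⟨Sf, hSsub, hScard, hSind⟩ := greedy_indep R hsym hrefl (4 * t) F hconf
    refine ⟨↑Sf, fun q hq => hfinF.mem_toFinset.1 (hSsub hq), ?_, ?_⟩
    · have hFcard : F.card = t * t := by
        rw [hFdef, ← Set.ncard_eq_toFinset_card _ hfinF,
          aux_ncard_prod _ _ (Set.toFinite _) (Set.toFinite _), hT₀, hT₁]
      have hn : t * t ≤ (4 * t + 1) * Sf.card := by
        calc t * t = F.card := hFcard.symm
          _ ≤ 4 * t * Sf.card := hScard
          _ ≤ (4 * t + 1) * Sf.card := Nat.mul_le_mul_right _ (by omega)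
      rw [Set.ncard_coe_finset, div_le_iff₀ (by positivity)]
      have : ((t * t : ℕ) : ℝ) ≤ (((4 * t + 1) * Sf.card : ℕ) : ℝ) := by exact_mod_cast hn
      push_cast at this ⊢
      nlinarith [this]
    · intro p hp q hq hpq
      have := hSind p hp q hq hpq
      rw [hRdef] at this
      exact not_not.1 this
end
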